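/- arXiv:1705.10105 — 5 statements merged into one kernel-verified Lean document; each statement's English description precedes it below -/
import Mathlib

section
/- Let X be a reflexive real Banach space and let Φ, Ψ : X → ℝ be two Gâteaux differentiable functionals such that Φ is continuous in the norm topology, sequentially weakly lower semicontinuous and coercive, and Ψ is sequentially weakly upper semicontinuous. For r > inf_X Φ define φ(r) := inf over w with Φ(w) < r of [ (sup over z with Φ(z) < r of Ψ(z)) − Ψ(w) ] / (r − Φ(w)). Then for every r > inf_X Φ and every λ > 0 with λ·φ(r) < 1, there exists w₀ ∈ X with Φ(w₀) < r such that Φ(w₀) − λΨ(w₀) ≤ Φ(w) − λΨ(w) for every w ∈ X with Φ(w) < r; moreover w₀ is a local minimum of J_λ := Φ − λΨ on X and a critical point of J_λ, i.e. Φ'(w₀) = λΨ'(w₀). -/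
/-!
The sublevel set `S = {Φ < r}` is bounded by coercivity. In a reflexive space a bounded sequence
has a weakly convergent subsequence (sequential Banach–Alaoglu in the bidual of its closed span,
which is separable and reflexive, hence has a separable dual). With the weak semicontinuity
hypotheses this makes `Φ` bounded below and `Ψ` bounded above on `S`, and the direct method gives
a weak limit `x` of a minimizing sequence of `J = Φ - λΨ` on `S` with `J x ≤ inf_S J` and
`Φ x ≤ inf_S J + λ sup_S Ψ`. The hypothesis `λ φ(r) < 1` provides `w ∈ S` with
`λ (sup_S Ψ - Ψ w) < r - Φ w`, which forces `Φ x < r`. As `S` is open, `x` is a local minimum of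
`J`, so the derivative of `J` along every line through `x` vanishes at `x`.
-/

open Filter Topology NormedSpace Set TopologicalSpace

theorem Submodule.exists_dual_eq_zero_apply_ne_zero {E : Type*} [NormedAddCommGroup E]
    [NormedSpace ℝ E] (M : Submodule ℝ E) (hM : IsClosed (M : Set E)) {x : E} (hx : x ∉ M) :
    ∃ f : StrongDual ℝ E, (∀ y ∈ M, f y = 0) ∧ f x ≠ 0 := by
  have : IsClosed (M : Set E) := hM
  obtain ⟨g, hg⟩ := SeparatingDual.exists_ne_zero (R := ℝ) (x := M.mkQ x)
    (by rwa [ne_eq, Submodule.mkQ_apply, Submodule.Quotient.mk_eq_zero])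
  refine ⟨g.comp M.mkQL, fun y hy => ?_, hg⟩
  simp [(Submodule.Quotient.mk_eq_zero M).2 hy]

theorem separableSpace_of_separableSpace_strongDual {E : Type*} [NormedAddCommGroup E]
    [NormedSpace ℝ E] [SeparableSpace (StrongDual ℝ E)] : SeparableSpace E := by
  obtain ⟨g, hg⟩ := exists_dense_seq (StrongDual ℝ E)
  have hnorming : ∀ k, ∃ z : E, ‖z‖ ≤ 1 ∧ ‖g k‖ / 2 ≤ |g k z| := by
    intro k
    rcases eq_or_ne (g k) 0 with h | h
    · exact ⟨0, by simp [h]⟩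
    obtain ⟨z, hz, hgz⟩ := (g k).exists_lt_apply_of_lt_opNorm (half_lt_self (norm_pos_iff.2 h))
    exact ⟨z, hz.le, hgz.le⟩
  choose z hz_norm hz_norming using hnorming
  set N := Submodule.span ℝ (range z)
  have hN : ∀ x, x ∈ N.topologicalClosure := by
    intro x
    by_contra hx
    obtain ⟨f, hfN, hfx⟩ :=
      N.topologicalClosure.exists_dual_eq_zero_apply_ne_zero N.isClosed_topologicalClosure hx
    have hf : 0 < ‖f‖ := norm_pos_iff.2 fun h => hfx (by simp [h])
    obtain ⟨k, hk⟩ := hg.exists_dist_lt f (by positivity : 0 < ‖f‖ / 4)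
    rw [dist_comm, dist_eq_norm] at hk
    have hfz : f (z k) = 0 := hfN _ (N.le_topologicalClosure (Submodule.subset_span ⟨k, rfl⟩))
    have hgz : |g k (z k)| ≤ ‖g k - f‖ :=
      calc |g k (z k)| = ‖(g k - f) (z k)‖ := by simp [hfz]
        _ ≤ ‖g k - f‖ * ‖z k‖ := (g k - f).le_opNorm _
        _ ≤ ‖g k - f‖ := mul_le_of_le_one_right (norm_nonneg _) (hz_norm k)
    have hgf : ‖f‖ ≤ ‖g k‖ + ‖g k - f‖ := by
      simpa using norm_sub_le (g k) (g k - f)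
    linarith [hz_norming k]
  exact isSeparable_univ_iff.1
    ((countable_range z).isSeparable.span.closure.mono fun x _ => hN x)

theorem Submodule.surjective_inclusionInDoubleDual {X : Type*} [NormedAddCommGroup X]
    [NormedSpace ℝ X] (hrefl : Function.Surjective (inclusionInDoubleDual ℝ X))
    (Y : Submodule ℝ X) (hY : IsClosed (Y : Set X)) :
    Function.Surjective (inclusionInDoubleDual ℝ Y) := by
  intro Λ
  let restrict : StrongDual ℝ X →L[ℝ] StrongDual ℝ Y :=
    (ContinuousLinearMap.compL ℝ Y X ℝ).flip Y.subtypeL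
  obtain ⟨x, hx⟩ := hrefl (Λ.comp restrict)
  have hxΛ : ∀ f, f x = Λ (restrict f) := fun f => DFunLike.congr_fun hx f
  have hxY : x ∈ Y := by
    by_contra h
    obtain ⟨f, hfY, hfx⟩ := Y.exists_dual_eq_zero_apply_ne_zero hY h
    have : restrict f = 0 := ContinuousLinearMap.ext fun y => hfY y y.2
    exact hfx (by rw [hxΛ, this, map_zero])
  refine ⟨⟨x, hxY⟩, ContinuousLinearMap.ext fun g => ?_⟩
  obtain ⟨f, hfg, -⟩ := exists_extension_norm_eq Y g
  have : restrict f = g := ContinuousLinearMap.ext hfg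
  rw [dual_def, ← hfg, ← this]
  exact hxΛ f

theorem separableSpace_strongDual_of_surjective_inclusionInDoubleDual {E : Type*}
    [NormedAddCommGroup E] [NormedSpace ℝ E] [SeparableSpace E]
    (hrefl : Function.Surjective (inclusionInDoubleDual ℝ E)) :
    SeparableSpace (StrongDual ℝ E) :=
  have := hrefl.denseRange.separableSpace (inclusionInDoubleDual ℝ E).continuous
  separableSpace_of_separableSpace_strongDual

theorem exists_subseq_tendsto_apply_of_norm_le {E : Type*} [NormedAddCommGroup E]
    [NormedSpace ℝ E] [SeparableSpace E] {u : ℕ → StrongDual ℝ E} {R : ℝ}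
    (hu : ∀ n, ‖u n‖ ≤ R) :
    ∃ (a : StrongDual ℝ E) (φ : ℕ → ℕ), StrictMono φ ∧
      ∀ x, Tendsto (fun n => u (φ n) x) atTop (𝓝 (a x)) := by
  have hmem : ∀ n, StrongDual.toWeakDual (u n) ∈
      WeakDual.toStrongDual ⁻¹' Metric.closedBall (0 : StrongDual ℝ E) R := fun n => by
    simpa using hu n
  obtain ⟨a, -, φ, hφ, ha⟩ := WeakDual.isSeqCompact_closedBall ℝ E 0 R hmem
  exact ⟨WeakDual.toStrongDual a, φ, hφ,
    fun x => ((WeakDual.eval_continuous x).tendsto a).comp ha⟩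

section

variable {X : Type*} [NormedAddCommGroup X] [NormedSpace ℝ X]

def WeakSeqTendsto (u : ℕ → X) (x : X) : Prop :=
  ∀ f : X →L[ℝ] ℝ, Tendsto (fun n => f (u n)) atTop (𝓝 (f x))

theorem exists_weakSeqTendsto_subseq (hrefl : Function.Surjective (inclusionInDoubleDual ℝ X))
    {u : ℕ → X} (hu : Bornology.IsBounded (range u)) :
    ∃ x φ, StrictMono φ ∧ WeakSeqTendsto (u ∘ φ) x := by
  let N := Submodule.span ℝ (range u)
  let Y := N.topologicalClosure
  have : SeparableSpace Y := (countable_range u).isSeparable.span.closure.separableSpace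
  have hYrefl := Y.surjective_inclusionInDoubleDual hrefl N.isClosed_topologicalClosure
  have := separableSpace_strongDual_of_surjective_inclusionInDoubleDual hYrefl
  let y : ℕ → Y := fun n => ⟨u n, N.le_topologicalClosure (Submodule.subset_span ⟨n, rfl⟩)⟩
  obtain ⟨R, hR⟩ := hu.subset_closedBall 0
  have hbdd : ∀ n, ‖inclusionInDoubleDual ℝ Y (y n)‖ ≤ R := fun n =>
    (double_dual_bound ℝ Y (y n)).trans (mem_closedBall_zero_iff.1 (hR ⟨n, rfl⟩))
  obtain ⟨a, φ, hφ, ha⟩ := exists_subseq_tendsto_apply_of_norm_le hbdd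
  obtain ⟨y₀, rfl⟩ := hYrefl a
  exact ⟨y₀, φ, hφ, fun f => ha (f.comp Y.subtypeL)⟩

theorem WeakSeqTendsto.add_smul_sub {v : ℕ → X} {x : X} {t : ℕ → ℝ} (hv : WeakSeqTendsto v x)
    (ht : ∀ n, t n ∈ Icc (0 : ℝ) 1) : WeakSeqTendsto (fun n => x + t n • (v n - x)) x := by
  intro f
  have hbdd : IsBoundedUnder (· ≤ ·) atTop ((‖·‖) ∘ t) :=
    isBoundedUnder_of ⟨1, fun n => abs_le.2 ⟨by linarith [(ht n).1], (ht n).2⟩⟩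
  have h := ((tendsto_sub_nhds_zero_iff.2 (hv f)).zero_mul_isBoundedUnder_le hbdd).const_add (f x)
  simpa [mul_comm] using h

theorem hasDerivAt_comp_line_of_tendsto_slope {F : X → ℝ} {w v : X} {L : ℝ}
    (h : Tendsto (fun t : ℝ => (F (w + t • v) - F w) / t) (𝓝[≠] 0) (𝓝 L)) :
    HasDerivAt (fun t : ℝ => F (w + t • v)) L 0 := by
  rw [hasDerivAt_iff_tendsto_slope_zero]
  simpa [div_eq_inv_mul] using h

theorem continuous_comp_line_of_gateaux {F : X → ℝ} {F' : X → X →L[ℝ] ℝ}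
    (hF : ∀ w v : X, Tendsto (fun t : ℝ => (F (w + t • v) - F w) / t) (𝓝[≠] 0) (𝓝 (F' w v)))
    (x v : X) : Continuous fun t : ℝ => F (x + t • v) := by
  refine continuous_iff_continuousAt.2 fun t₀ => ?_
  have h : HasDerivAt (fun t : ℝ => F (x + t₀ • v + t • v)) (F' (x + t₀ • v) v) (t₀ - t₀) := by
    rw [sub_self]
    exact hasDerivAt_comp_line_of_tendsto_slope (hF _ v)
  convert (h.comp_sub_const t₀ t₀).continuousAt using 2 with t
  rw [add_assoc, ← add_smul, add_sub_cancel]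

theorem IsLocalMin.eq_zero_of_hasDerivAt_comp_line {J : X → ℝ} {x : X} (hJ : IsLocalMin J x)
    {L : X →L[ℝ] ℝ} (hL : ∀ v, HasDerivAt (fun t : ℝ => J (x + t • v)) (L v) 0) : L = 0 := by
  ext v
  have hline : IsLocalMin (fun t : ℝ => J (x + t • v)) 0 :=
    IsLocalMin.comp_continuous (g := fun t : ℝ => x + t • v) (by simpa using hJ) (by fun_prop)
  exact hline.hasDerivAt_eq_zero (hL v)

/- `liminf` and `limsup` of an unbounded real sequence are junk values, so an unbounded sequence
is useless against the semicontinuity hypotheses; the intermediate value theorem on the segments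
towards its weak limit replaces it by a sequence on which `Θ` is constant. -/
theorem exists_weakSeqTendsto_const_gt_of_not_bddAbove
    (hrefl : Function.Surjective (inclusionInDoubleDual ℝ X)) {Θ : X → ℝ}
    (hline : ∀ x v : X, Continuous fun t : ℝ => Θ (x + t • v)) {S : Set X}
    (hS : Bornology.IsBounded S) (hΘ : ¬BddAbove (Θ '' S)) :
    ∃ (z : ℕ → X) (x : X) (c : ℝ), WeakSeqTendsto z x ∧ (∀ n, Θ (z n) = c) ∧ Θ x < c := by
  have hunbdd : ∀ n : ℕ, ∃ w ∈ S, (n : ℝ) < Θ w := fun n => by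
    simpa using not_bddAbove_iff.1 hΘ n
  choose u huS hu using hunbdd
  obtain ⟨x, φ, hφ, hux⟩ :=
    exists_weakSeqTendsto_subseq hrefl (hS.subset (range_subset_iff.2 huS))
  set c := Θ x + 1
  obtain ⟨N, hN⟩ := exists_nat_ge c
  have hv : WeakSeqTendsto (fun n => u (φ (n + N))) x := fun f =>
    (hux f).comp (tendsto_add_atTop_nat N)
  have hvc : ∀ n, c ≤ Θ (u (φ (n + N))) := fun n => by
    have : (N : ℝ) ≤ φ (n + N) := by exact_mod_cast (Nat.le_add_left N n).trans hφ.le_apply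
    linarith [hu (φ (n + N))]
  have hivt : ∀ n, ∃ t ∈ Icc (0 : ℝ) 1, Θ (x + t • (u (φ (n + N)) - x)) = c := fun n =>
    intermediate_value_Icc zero_le_one (hline _ _).continuousOn
      ⟨by simp [c], by simpa using hvc n⟩
  choose t ht hzc using hivt
  exact ⟨_, x, c, hv.add_smul_sub ht, hzc, lt_add_one _⟩

theorem bddAbove_image_of_weakSeqUSC
    (hrefl : Function.Surjective (inclusionInDoubleDual ℝ X)) {Θ : X → ℝ}
    (hline : ∀ x v : X, Continuous fun t : ℝ => Θ (x + t • v))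
    (husc : ∀ u x, WeakSeqTendsto u x → limsup (fun n => Θ (u n)) atTop ≤ Θ x) {S : Set X}
    (hS : Bornology.IsBounded S) : BddAbove (Θ '' S) := by
  by_contra hΘ
  obtain ⟨z, x, c, hzx, hz, hx⟩ :=
    exists_weakSeqTendsto_const_gt_of_not_bddAbove hrefl hline hS hΘ
  have := husc z x hzx
  simp only [hz, limsup_const] at this
  linarith

theorem bddBelow_image_of_weakSeqLSC
    (hrefl : Function.Surjective (inclusionInDoubleDual ℝ X)) {Θ : X → ℝ}
    (hline : ∀ x v : X, Continuous fun t : ℝ => Θ (x + t • v))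
    (hlsc : ∀ u x, WeakSeqTendsto u x → Θ x ≤ liminf (fun n => Θ (u n)) atTop) {S : Set X}
    (hS : Bornology.IsBounded S) : BddBelow (Θ '' S) := by
  by_contra hΘ
  have hnegΘ : ¬BddAbove ((fun w => -Θ w) '' S) := fun ⟨b, hb⟩ =>
    hΘ ⟨-b, forall_mem_image.2 fun w hw => neg_le.1 (hb (mem_image_of_mem _ hw))⟩
  obtain ⟨z, x, c, hzx, hz, hx⟩ := exists_weakSeqTendsto_const_gt_of_not_bddAbove hrefl
    (fun x v => (hline x v).neg) hS hnegΘ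
  have := hlsc z x hzx
  simp only [fun n => neg_eq_iff_eq_neg.1 (hz n), liminf_const] at this
  linarith

theorem exists_isMinOn_sub_mul_and_le_add_mul_sSup
    (hrefl : Function.Surjective (inclusionInDoubleDual ℝ X)) {Φ Ψ : X → ℝ}
    (hΦ : ∀ u x, WeakSeqTendsto u x → Φ x ≤ liminf (fun n => Φ (u n)) atTop)
    (hΨ : ∀ u x, WeakSeqTendsto u x → limsup (fun n => Ψ (u n)) atTop ≤ Ψ x)
    {S : Set X} (hS : Bornology.IsBounded S) (hSne : S.Nonempty) (hΦS : BddBelow (Φ '' S))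
    (hΨS : BddAbove (Ψ '' S)) {lam : ℝ} (hlam : 0 < lam) :
    ∃ x, IsMinOn (fun w => Φ w - lam * Ψ w) S x ∧
      ∀ w ∈ S, Φ x ≤ Φ w - lam * Ψ w + lam * sSup (Ψ '' S) := by
  set J := fun w => Φ w - lam * Ψ w
  set K := sSup (Ψ '' S)
  have hK : ∀ w ∈ S, lam * Ψ w ≤ lam * K := fun w hw =>
    mul_le_mul_of_nonneg_left (le_csSup hΨS (mem_image_of_mem _ hw)) hlam.le
  obtain ⟨C, hC⟩ := hΦS
  have hJS : BddBelow (J '' S) := ⟨C - lam * K, forall_mem_image.2 fun w hw => by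
    linarith [hC (mem_image_of_mem _ hw), hK w hw]⟩
  set m := sInf (J '' S)
  have hm : ∀ w ∈ S, m ≤ J w := fun w hw => csInf_le hJS (mem_image_of_mem _ hw)
  obtain ⟨Ju, hJu_anti, hJu, hJuS⟩ := exists_seq_tendsto_sInf (hSne.image J) hJS
  choose u huS huJ using hJuS
  have hΦu : ∀ n, Φ (u n) ∈ Icc C (Ju 0 + lam * K) := fun n => by
    have := hJu_anti (Nat.zero_le n)
    constructor <;> linarith [hC (mem_image_of_mem _ (huS n)), hK _ (huS n), huJ n]
  obtain ⟨A, -, φ, hφ, hA⟩ := isCompact_Icc.tendsto_subseq hΦu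
  obtain ⟨x, ψ, hψ, hx⟩ := exists_weakSeqTendsto_subseq hrefl
    (hS.subset (range_subset_iff.2 fun n => huS (φ n)))
  have hΦv : Tendsto (fun n => Φ (u (φ (ψ n)))) atTop (𝓝 A) := hA.comp hψ.tendsto_atTop
  have hJv : Tendsto (fun n => J (u (φ (ψ n)))) atTop (𝓝 m) := by
    simp only [huJ]
    exact hJu.comp (hφ.comp hψ).tendsto_atTop
  have hΨv : Tendsto (fun n => Ψ (u (φ (ψ n)))) atTop (𝓝 ((A - m) / lam)) := by
    refine ((hΦv.sub hJv).div_const lam).congr fun n => ?_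
    field_simp
    ring
  have hΦx : Φ x ≤ A := by simpa [hΦv.liminf_eq] using hΦ _ x hx
  have hΨx : (A - m) / lam ≤ Ψ x := by simpa [hΨv.limsup_eq] using hΨ _ x hx
  have hAK : lam * ((A - m) / lam) ≤ lam * K := mul_le_mul_of_nonneg_left
    (le_of_tendsto' hΨv fun n => le_csSup hΨS (mem_image_of_mem _ (huS _))) hlam.le
  have hlam_cancel : lam * ((A - m) / lam) = A - m := by field_simp
  have hJx : J x ≤ m := by
    linarith [mul_le_mul_of_nonneg_left hΨx hlam.le]
  exact ⟨x, fun w hw => hJx.trans (hm w hw), fun w hw => by linarith [hm w hw]⟩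

end

theorem Bornology.isBounded_setOf_lt_of_tendsto_cobounded {α β : Type*} [Bornology α]
    [LinearOrder β] {Φ : α → β} (hΦ : Tendsto Φ (cobounded α) atTop) (r : β) :
    IsBounded {w | Φ w < r} :=
  isBounded_def.2 (by filter_upwards [hΦ.eventually_ge_atTop r] with w hw using not_lt.2 hw)

theorem ricceri_local_minimum_general
    {X : Type*} [NormedAddCommGroup X] [NormedSpace ℝ X]
    (hrefl : Function.Surjective (NormedSpace.inclusionInDoubleDual ℝ X))
    (Φ Ψ : X → ℝ) (Φ' Ψ' : X → (X →L[ℝ] ℝ))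
    (hΦgateaux : ∀ w v : X,
      Tendsto (fun t : ℝ => (Φ (w + t • v) - Φ w) / t) (𝓝[≠] (0 : ℝ)) (𝓝 (Φ' w v)))
    (hΨgateaux : ∀ w v : X,
      Tendsto (fun t : ℝ => (Ψ (w + t • v) - Ψ w) / t) (𝓝[≠] (0 : ℝ)) (𝓝 (Ψ' w v)))
    (hΦcont : Continuous Φ)
    (hΦwlsc : ∀ (u : ℕ → X) (x : X),
      (∀ f : X →L[ℝ] ℝ, Tendsto (fun n => f (u n)) atTop (𝓝 (f x))) →
      Φ x ≤ Filter.liminf (fun n => Φ (u n)) atTop)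
    (hΦcoercive : Tendsto Φ (Filter.comap norm atTop) atTop)
    (hΨwusc : ∀ (u : ℕ → X) (x : X),
      (∀ f : X →L[ℝ] ℝ, Tendsto (fun n => f (u n)) atTop (𝓝 (f x))) →
      Filter.limsup (fun n => Ψ (u n)) atTop ≤ Ψ x)
    (r : ℝ) (hr : ∃ w : X, Φ w < r)
    (lam : ℝ) (hlam : 0 < lam)
    (hlamφ : lam * sInf ((fun w : X =>
        (sSup (Ψ '' {z : X | Φ z < r}) - Ψ w) / (r - Φ w)) '' {w : X | Φ w < r}) < 1) :
    ∃ w₀ : X, Φ w₀ < r ∧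
      (∀ w : X, Φ w < r → Φ w₀ - lam * Ψ w₀ ≤ Φ w - lam * Ψ w) ∧
      IsLocalMin (fun w => Φ w - lam * Ψ w) w₀ ∧
      Φ' w₀ = lam • Ψ' w₀ := by
  set S := {w : X | Φ w < r}
  have hS : Bornology.IsBounded S :=
    Bornology.isBounded_setOf_lt_of_tendsto_cobounded (by rwa [comap_norm_atTop] at hΦcoercive) r
  have hΦS := bddBelow_image_of_weakSeqLSC hrefl (fun x v => hΦcont.comp (by fun_prop)) hΦwlsc hS
  have hΨS := bddAbove_image_of_weakSeqUSC hrefl (continuous_comp_line_of_gateaux hΨgateaux)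
    hΨwusc hS
  have hSne : S.Nonempty := hr
  obtain ⟨_, ⟨w₁, hw₁, rfl⟩, hw₁φ⟩ :=
    exists_lt_of_csInf_lt (hSne.image _) ((lt_div_iff₀' hlam).2 hlamφ)
  rw [div_lt_div_iff₀ (sub_pos.2 hw₁) hlam] at hw₁φ
  obtain ⟨x, hmin, hΦx⟩ :=
    exists_isMinOn_sub_mul_and_le_add_mul_sSup hrefl hΦwlsc hΨwusc hS hSne hΦS hΨS hlam
  have hxS : Φ x < r := by linarith [hΦx w₁ hw₁]
  have hloc : IsLocalMin (fun w => Φ w - lam * Ψ w) x :=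
    hmin.isLocalMin ((isOpen_lt hΦcont continuous_const).mem_nhds hxS)
  refine ⟨x, hxS, hmin, hloc, sub_eq_zero.1 (hloc.eq_zero_of_hasDerivAt_comp_line fun v => ?_)⟩
  rw [sub_apply, smul_apply, smul_eq_mul]
  exact (hasDerivAt_comp_line_of_tendsto_slope (hΦgateaux x v)).sub
    ((hasDerivAt_comp_line_of_tendsto_slope (hΨgateaux x v)).const_mul lam)

/-- **Ricceri's local minimum theorem.** Let `X` be a reflexive real Banach space and
`Φ, Ψ : X → ℝ` Gâteaux differentiable functionals (with Gâteaux derivatives `Φ'`, `Ψ'`),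
with `Φ` norm-continuous, sequentially weakly lower semicontinuous and coercive, and `Ψ`
sequentially weakly upper semicontinuous. For `r > inf Φ` and `λ > 0` with `λ·φ(r) < 1`,
where `φ(r) = inf_{Φ(w)<r} (sup_{Φ(z)<r} Ψ(z) − Ψ(w))/(r − Φ(w))`, the functional
`J_λ = Φ − λΨ` restricted to `{Φ < r}` has a global minimum `w₀`, which is a local
minimum and critical point of `J_λ` on `X`. -/
theorem ricceri_local_minimum
    {X : Type*} [NormedAddCommGroup X] [NormedSpace ℝ X] [CompleteSpace X]
    (hrefl : Function.Surjective (NormedSpace.inclusionInDoubleDual ℝ X))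
    (Φ Ψ : X → ℝ) (Φ' Ψ' : X → (X →L[ℝ] ℝ))
    (hΦgateaux : ∀ w v : X,
      Tendsto (fun t : ℝ => (Φ (w + t • v) - Φ w) / t) (𝓝[≠] (0 : ℝ)) (𝓝 (Φ' w v)))
    (hΨgateaux : ∀ w v : X,
      Tendsto (fun t : ℝ => (Ψ (w + t • v) - Ψ w) / t) (𝓝[≠] (0 : ℝ)) (𝓝 (Ψ' w v)))
    (hΦcont : Continuous Φ)
    (hΦwlsc : ∀ (u : ℕ → X) (x : X),
      (∀ f : X →L[ℝ] ℝ, Tendsto (fun n => f (u n)) atTop (𝓝 (f x))) →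
      Φ x ≤ Filter.liminf (fun n => Φ (u n)) atTop)
    (hΦcoercive : Tendsto Φ (Filter.comap norm atTop) atTop)
    (hΨwusc : ∀ (u : ℕ → X) (x : X),
      (∀ f : X →L[ℝ] ℝ, Tendsto (fun n => f (u n)) atTop (𝓝 (f x))) →
      Filter.limsup (fun n => Ψ (u n)) atTop ≤ Ψ x)
    (r : ℝ) (hr : ∃ w : X, Φ w < r)
    (lam : ℝ) (hlam : 0 < lam)
    (hlamφ : lam * sInf ((fun w : X =>
        (sSup (Ψ '' {z : X | Φ z < r}) - Ψ w) / (r - Φ w)) '' {w : X | Φ w < r}) < 1) :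
    ∃ w₀ : X, Φ w₀ < r ∧
      (∀ w : X, Φ w < r → Φ w₀ - lam * Ψ w₀ ≤ Φ w - lam * Ψ w) ∧
      IsLocalMin (fun w => Φ w - lam * Ψ w) w₀ ∧
      Φ' w₀ = lam • Ψ' w₀ :=
  ricceri_local_minimum_general hrefl Φ Ψ Φ' Ψ' hΦgateaux hΨgateaux hΦcont hΦwlsc hΦcoercive hΨwusc
    r hr lam hlam hlamφ
end

section
/- Let X be a real Banach space and J : X → ℝ a C¹ functional satisfying the Palais–Smale condition. If u₁ and u₂ are two distinct points of X which are both local minima of J (or both local maxima of J), then J admits a third critical point u₃ ∉ {u₁, u₂}, i.e. a point u₃ with J'(u₃) = 0 and u₃ ≠ u₁, u₃ ≠ u₂. -/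
/-!
Replacing `J` by `-J`, both points are local minima, and we may assume `J u₂ ≤ J u₁`. Take a
small sphere around `u₁`, inside a ball on which `u₁` minimizes `J`, with `u₂` outside it. If
`inf J = J u₁` on the sphere, Ekeland's principle on a ball produces Palais–Smale sequences
accumulating on the sphere, whose limit is a critical point on it. Otherwise the sphere is a
mountain range of height `a > J u₁ ≥ J u₂` separating `u₁` from `u₂`. Ekeland's principle for
`γ ↦ max (J ∘ γ)` on the complete space of paths, together with a deformation of almost optimal
paths along a continuous descent field, gives a Palais–Smale sequence at the minimax level `c ≥ a`;
its limit is a critical point with value `c`, hence different from `u₁` and `u₂`.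
-/

open Filter Topology Set Metric

section Ekeland

variable {Y : Type*} [MetricSpace Y] [CompleteSpace Y] {f : Y → ℝ}

/-- Ekeland's variational principle. -/
theorem LowerSemicontinuous.exists_forall_le_add_mul_dist (hf : LowerSemicontinuous f)
    (hbdd : BddBelow (range f)) {ε : ℝ} (hε : 0 < ε) (x₀ : Y) :
    ∃ y, f y + ε * dist x₀ y ≤ f x₀ ∧ ∀ z, f y ≤ f z + ε * dist y z := by
  set S : Y → Set Y := fun x => {y | f y + ε * dist x y ≤ f x}
  have mem_self (x : Y) : x ∈ S x := by simp [S]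
  have mem_trans {x y z : Y} (hy : y ∈ S x) (hz : z ∈ S y) : z ∈ S x := by
    have := mul_le_mul_of_nonneg_left (dist_triangle x y z) hε.le
    simp only [S, mem_ofPred_eq] at *
    linarith
  have hS_closed (x : Y) : IsClosed (S x) :=
    (hf.add (continuous_const.mul (continuous_const.dist continuous_id)).lowerSemicontinuous)
      |>.isClosed_preimage (f x)
  have almost_min (n : ℕ) (x : Y) : ∃ y ∈ S x, ∀ z ∈ S x, f y ≤ f z + ε / (n + 1) := by
    obtain ⟨-, ⟨y, hy, rfl⟩, hlt⟩ :=
      Real.lt_sInf_add_pos (s := f '' S x) ⟨f x, x, mem_self x, rfl⟩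
        (by positivity : 0 < ε / (n + 1))
    exact ⟨y, hy, fun z hz => hlt.le.trans <| add_le_add_left
      (csInf_le (hbdd.mono (image_subset_range _ _)) ⟨z, hz, rfl⟩) _⟩
  choose g hgS hg using almost_min
  let x : ℕ → Y := fun n => Nat.rec x₀ g n
  have chain (n : ℕ) : ∀ m, n ≤ m → x m ∈ S (x n) :=
    Nat.le_induction (mem_self _) fun m _ ih => mem_trans ih (hgS m (x m))
  -- `x (n + 1)` almost minimizes `f` on `S (x n) ⊇ S (x (n + 1))`.
  have dist_le (n : ℕ) (z : Y) (hz : z ∈ S (x (n + 1))) : dist (x (n + 1)) z ≤ 1 / (n + 1) := by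
    have h₁ : f (x (n + 1)) ≤ f z + ε / (n + 1) := hg n (x n) z (mem_trans (hgS n (x n)) hz)
    have h₂ : f z + ε * dist (x (n + 1)) z ≤ f (x (n + 1)) := hz
    refine le_of_mul_le_mul_left ?_ hε
    rw [mul_one_div]
    linarith
  have cauchy : CauchySeq x := Metric.cauchySeq_iff'.2 fun δ hδ => by
    obtain ⟨N, hN⟩ := exists_nat_one_div_lt hδ
    exact ⟨N + 1, fun m hm => by
      rw [dist_comm]; exact (dist_le N _ (chain _ _ hm)).trans_lt hN⟩
  obtain ⟨y, hy⟩ := cauchySeq_tendsto_of_complete cauchy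
  have hyS (n : ℕ) : y ∈ S (x n) :=
    (hS_closed _).mem_of_tendsto hy (eventually_atTop.2 ⟨n, chain n⟩)
  refine ⟨y, hyS 0, fun z => ?_⟩
  by_contra! hz
  have hzS (n : ℕ) : z ∈ S (x n) := mem_trans (hyS n) (show z ∈ S y from hz.le)
  obtain rfl : y = z := eq_of_forall_dist_le fun δ hδ => by
    obtain ⟨N, hN⟩ := exists_nat_one_div_lt (half_pos hδ)
    linarith [dist_triangle_left y z (x (N + 1)), dist_le N y (hyS (N + 1)),
      dist_le N z (hzS (N + 1))]
  simp at hz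

end Ekeland

section Deformation

variable {X : Type*} [NormedAddCommGroup X] [NormedSpace ℝ X]

theorem HasFDerivAt.norm_le_of_isLocalMin_add_mul_dist {J : X → ℝ} {J' : X →L[ℝ] ℝ} {y : X}
    (hJ : HasFDerivAt J J' y) {ε : ℝ} (hε : 0 ≤ ε)
    (hmin : IsLocalMin (fun z => J z + ε * dist y z) y) : ‖J'‖ ≤ ε := by
  have key (v : X) : -(ε * ‖v‖) ≤ J' v := by
    -- On the ray `t ↦ y + t • v`, `t ≥ 0`, the penalty `ε * dist y ·` is linear in `t`.
    set φ : ℝ → ℝ := fun t => J (y + t • v) + t * (ε * ‖v‖)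
    have hline : HasDerivAt (fun t : ℝ => y + t • v) v 0 := by
      simpa using ((hasDerivAt_id (0 : ℝ)).smul_const v).const_add y
    have hφ : HasDerivAt φ (J' v + ε * ‖v‖) 0 := by
      have hJ0 : HasFDerivAt J J' (y + (0 : ℝ) • v) := by simpa using hJ
      exact (hJ0.comp_hasDerivAt 0 hline).add (hasDerivAt_mul_const (ε * ‖v‖))
    have hline_min : IsLocalMin ((fun z => J z + ε * dist y z) ∘ fun t : ℝ => y + t • v) 0 :=
      IsLocalMin.comp_continuous (by rwa [zero_smul, add_zero]) hline.continuousAt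
    have hφmin : IsLocalMinOn φ (Ici 0) 0 := by
      filter_upwards [hline_min.filter_mono nhdsWithin_le_nhds, self_mem_nhdsWithin] with t ht ht0
      have hdist : dist y (y + t • v) = t * ‖v‖ := by
        simp [dist_eq_norm, norm_smul, abs_of_nonneg (mem_Ici.1 ht0)]
      simp only [Function.comp_apply, hdist, dist_self, mul_zero, add_zero, zero_smul] at ht
      simp only [φ, zero_smul, add_zero, zero_mul]
      linarith
    have := hφmin.hasFDerivWithinAt_nonneg hφ.hasDerivWithinAt.hasFDerivWithinAt
      (y := 1) (mem_posTangentConeAt_of_segment_subset (by simpa using Icc_subset_Ici_self))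
    linarith [show 0 ≤ J' v + ε * ‖v‖ by simpa using this]
  refine J'.opNorm_le_bound hε fun v => abs_le.2 ⟨key v, ?_⟩
  simpa using key (-v)

theorem ContinuousLinearMap.exists_apply_lt_neg_of_lt_opNorm (T : X →L[ℝ] ℝ) {r : ℝ}
    (hr : r < ‖T‖) : ∃ v : X, ‖v‖ ≤ 1 ∧ T v < -r := by
  obtain ⟨v, hv, hrv⟩ := T.exists_lt_apply_of_lt_opNorm hr
  rcases lt_abs.1 hrv with h | h
  · exact ⟨-v, by simpa using hv.le, by simpa using h⟩
  · exact ⟨v, hv.le, by linarith⟩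

variable {K : Type*} [TopologicalSpace K]

theorem exists_continuous_descent_field [NormalSpace K] [ParacompactSpace K]
    {T : K → X →L[ℝ] ℝ} (hT : Continuous T) {M N : Set K} (hM : IsClosed M) (hN : IsClosed N)
    (hMN : Disjoint M N) {r : ℝ} (hr : ∀ s ∈ M, r < ‖T s‖) :
    ∃ v : C(K, X), (∀ s, ‖v s‖ ≤ 1) ∧ (∀ s ∈ M, T s (v s) < -r) ∧ ∀ s ∈ N, v s = 0 := by
  set t : K → Set X := fun s => closedBall 0 1 ∩ {w | s ∈ M → T s w < -r} ∩ {w | s ∈ N → w = 0}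
  have convex (s : K) : Convex ℝ (t s) := by
    refine ((convex_closedBall 0 1).inter ?_).inter ?_
    · by_cases hs : s ∈ M
      · simpa [hs] using convex_halfSpace_lt (T s).isLinear (-r)
      · simp [hs, convex_univ]
    · by_cases hs : s ∈ N
      · simp [hs]
      · simp [hs, convex_univ]
  obtain ⟨v, hv⟩ := exists_continuous_forall_mem_convex_of_local_const convex fun s => by
    by_cases hs : s ∈ M
    · obtain ⟨w, hw, hTw⟩ := (T s).exists_apply_lt_neg_of_lt_opNorm (hr s hs)
      refine ⟨w, ?_⟩
      filter_upwards [hN.isOpen_compl.mem_nhds (hMN.notMem_of_mem_left hs),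
        ((ContinuousLinearMap.apply ℝ ℝ w).continuous.comp hT).continuousAt.eventually_lt
          continuousAt_const hTw] with s' hs'N hs'
      exact ⟨⟨by simpa using hw, fun _ => hs'⟩, fun h => absurd h hs'N⟩
    · refine ⟨0, ?_⟩
      filter_upwards [hM.isOpen_compl.mem_nhds hs] with s' hs'
      exact ⟨⟨by simp, fun h => absurd h hs'⟩, fun _ => rfl⟩
  exact ⟨v, fun s => by simpa using (hv s).1.1, fun s hs => (hv s).1.2 hs, fun s hs => (hv s).2 hs⟩

theorem eventually_forall_apply_add_smul_le [CompactSpace K] {J : X → ℝ}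
    {J' : X → X →L[ℝ] ℝ} (hJ : ∀ x, HasFDerivAt J (J' x) x) (hJ' : Continuous J')
    {p v : K → X} (hp : Continuous p) (hv : Continuous v) (hv₁ : ∀ s, ‖v s‖ ≤ 1)
    {η : ℝ} (hη : 0 < η) :
    ∀ᶠ τ in 𝓝[≥] (0 : ℝ), ∀ s, J (p s + τ • v s) ≤ J (p s) + τ * (J' (p s) (v s) + η) := by
  have tube : ∀ᶠ θ in 𝓝 (0 : ℝ), ∀ s ∈ univ, ‖J' (p s + θ • v s) - J' (p s)‖ < η := by
    refine isCompact_univ.eventually_forall_of_forall_eventually fun s _ => ?_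
    have hcont : Continuous fun q : ℝ × K => ‖J' (p q.2 + q.1 • v q.2) - J' (p q.2)‖ := by
      fun_prop
    exact hcont.continuousAt.eventually_lt continuousAt_const (by simpa using hη)
  obtain ⟨ρ, hρ, hρη⟩ := Metric.eventually_nhds_iff.1 tube
  filter_upwards [Ico_mem_nhdsGE hρ] with τ ⟨hτ₀, hτρ⟩ s
  have hseg : ∀ z ∈ segment ℝ (p s) (p s + τ • v s), ‖J' z - J' (p s)‖ ≤ η := by
    intro z hz
    rw [segment_eq_image'] at hz
    obtain ⟨θ, ⟨hθ₀, hθ₁⟩, rfl⟩ := hz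
    have h1 : dist (θ * τ) 0 < ρ := by
      rw [Real.dist_0_eq_abs, abs_of_nonneg (by positivity)]
      nlinarith
    have h2 := (hρη h1 s trivial).le
    simpa only [add_sub_cancel_left, smul_smul] using h2
  have hmvt := (convex_segment _ _).norm_image_sub_le_of_norm_hasFDerivWithin_le'
    (fun z _ => (hJ z).hasFDerivWithinAt) hseg (left_mem_segment ℝ _ _) (right_mem_segment ℝ _ _)
  rw [add_sub_cancel_left, map_smul, smul_eq_mul, norm_smul, Real.norm_of_nonneg hτ₀] at hmvt
  have := (abs_le.1 (Real.norm_eq_abs _ ▸ hmvt)).2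
  have := mul_le_mul_of_nonneg_left (hv₁ s) (mul_nonneg hη.le hτ₀)
  nlinarith

theorem eventually_exists_deformation_of_steep [CompactSpace K] [NormalSpace K] {J : X → ℝ}
    {J' : X → X →L[ℝ] ℝ} (hJ : ∀ x, HasFDerivAt J (J' x) x) (hJ' : Continuous J')
    (γ : C(K, X)) {N : Set K} (hN : IsClosed N) {m κ r ρ : ℝ} (hκ : 0 < κ) (hρr : ρ < r)
    (hm : ∀ s, J (γ s) ≤ m) (hsteep : ∀ s, m - κ ≤ J (γ s) → r < ‖J' (γ s)‖)
    (hNlow : ∀ s ∈ N, J (γ s) < m - κ) :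
    ∀ᶠ τ in 𝓝[>] (0 : ℝ), ∃ ξ : C(K, X),
      (∀ s, ‖ξ s - γ s‖ ≤ τ) ∧ EqOn ξ γ N ∧ ∀ s, J (ξ s) ≤ m - ρ * τ := by
  have hJc : Continuous J := continuous_iff_continuousAt.2 fun x => (hJ x).continuousAt
  set M := {s | m - κ ≤ J (γ s)}
  have hM : IsClosed M := isClosed_le continuous_const (hJc.comp γ.continuous)
  have hMN : Disjoint M N := disjoint_left.2 fun s hsM hsN => (hNlow s hsN).not_ge hsM
  obtain ⟨v, hv₁, hvM, hvN⟩ :=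
    exists_continuous_descent_field (hJ'.comp γ.continuous) hM hN hMN hsteep
  obtain ⟨C, hC⟩ := isCompact_univ.exists_bound_of_continuousOn (hJ'.comp γ.continuous).continuousOn
  have hsmall : ∀ᶠ τ in 𝓝 (0 : ℝ), τ * (C + r) < κ :=
    (continuous_id.mul continuous_const).continuousAt.eventually_lt continuousAt_const
      (by simpa using hκ)
  filter_upwards [(eventually_forall_apply_add_smul_le hJ hJ' γ.continuous v.continuous hv₁
      (sub_pos.2 hρr)).filter_mono (nhdsWithin_mono _ Ioi_subset_Ici_self),
    nhdsWithin_le_nhds hsmall, self_mem_nhdsWithin] with τ hτ hτκ (hτ₀ : 0 < τ)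
  refine ⟨⟨fun s => γ s + τ • v s, by fun_prop⟩, fun s => ?_, fun s hs => ?_, fun s => ?_⟩
  · simpa [norm_smul, abs_of_pos hτ₀] using mul_le_mul_of_nonneg_left (hv₁ s) hτ₀.le
  · simp [hvN s hs]
  · have hξ := hτ s
    simp only [ContinuousMap.coe_mk]
    by_cases hs : s ∈ M
    · have := mul_le_mul_of_nonneg_left (hvM s hs).le hτ₀.le
      simp only [Function.comp_apply] at this
      linarith [hm s]
    · have hlow : J (γ s) < m - κ := not_le.1 hs
      have hCs : J' (γ s) (v s) ≤ C := calc
        J' (γ s) (v s) ≤ ‖J' (γ s) (v s)‖ := le_abs_self _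
        _ ≤ ‖J' (γ s)‖ * 1 := (J' (γ s)).le_opNorm_of_le (hv₁ s)
        _ ≤ C := by simpa using hC s trivial
      have := mul_le_mul_of_nonneg_left hCs hτ₀.le
      nlinarith

end Deformation

section MaxAlong

variable {X K : Type*} [TopologicalSpace X] [TopologicalSpace K] {J : X → ℝ}

noncomputable def maxAlong (J : X → ℝ) (γ : C(K, X)) : ℝ := ⨆ t, J (γ t)

theorem bddAbove_range_apply_comp [CompactSpace K] (hJ : Continuous J) (γ : C(K, X)) :
    BddAbove (range fun t => J (γ t)) :=
  (isCompact_range (hJ.comp γ.continuous)).bddAbove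

theorem le_maxAlong [CompactSpace K] (hJ : Continuous J) (γ : C(K, X)) (t : K) :
    J (γ t) ≤ maxAlong J γ :=
  le_ciSup (bddAbove_range_apply_comp hJ γ) t

theorem maxAlong_le [Nonempty K] {γ : C(K, X)} {m : ℝ} (h : ∀ t, J (γ t) ≤ m) :
    maxAlong J γ ≤ m :=
  ciSup_le h

theorem lowerSemicontinuous_maxAlong [CompactSpace K] (hJ : Continuous J) :
    LowerSemicontinuous (maxAlong (K := K) J) :=
  lowerSemicontinuous_ciSup (bddAbove_range_apply_comp hJ) fun t =>
    (hJ.comp (continuous_eval_const t)).lowerSemicontinuous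

theorem ContinuousMap.isClosed_setOf_eqOn [T2Space X] (γ₀ : C(K, X)) (N : Set K) :
    IsClosed {γ : C(K, X) | EqOn γ γ₀ N} := by
  simp only [EqOn, ofPred_forall]
  exact isClosed_iInter fun s => isClosed_iInter fun _ =>
    isClosed_eq (continuous_eval_const s) continuous_const

end MaxAlong

theorem exists_pos_lt_and_sq_lt {a : ℝ} (ha : 0 < a) : ∃ ε > 0, ε < a ∧ ε ^ 2 < a := by
  refine ⟨min (a / 2) (1 / 2), by positivity, by linarith [min_le_left (a / 2) (1 / 2)], ?_⟩
  nlinarith [min_le_left (a / 2) (1 / 2), min_le_right (a / 2) (1 / 2),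
    (by positivity : 0 < min (a / 2) (1 / 2))]

section Minimax

variable {X K : Type*} [NormedAddCommGroup X] [NormedSpace ℝ X] [TopologicalSpace K]
  [CompactSpace K]

noncomputable def minimaxLevel (J : X → ℝ) (N : Set K) (γ₀ : C(K, X)) : ℝ :=
  ⨅ γ : {γ : C(K, X) // EqOn γ γ₀ N}, maxAlong J γ.1

theorem exists_maxAlong_add_mul_dist_lt [NormalSpace K] [Nonempty K] {J : X → ℝ}
    {J' : X → X →L[ℝ] ℝ} (hJ : ∀ x, HasFDerivAt J (J' x) x) (hJ' : Continuous J')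
    (γ : C(K, X)) {N : Set K} (hN : IsClosed N) {κ ε r : ℝ} (hκ : 0 < κ) (hε : 0 ≤ ε)
    (hεr : ε < r) (hsteep : ∀ s, maxAlong J γ - κ ≤ J (γ s) → r < ‖J' (γ s)‖)
    (hNlow : ∀ s ∈ N, J (γ s) < maxAlong J γ - κ) :
    ∃ ξ : C(K, X), EqOn ξ γ N ∧ maxAlong J ξ + ε * dist ξ γ < maxAlong J γ := by
  have hJc : Continuous J := continuous_iff_continuousAt.2 fun x => (hJ x).continuousAt
  obtain ⟨τ, ⟨ξ, hξγ, hξN, hξ⟩, hτ : 0 < τ⟩ := ((eventually_exists_deformation_of_steep hJ hJ' γ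
    hN hκ (by linarith : (ε + r) / 2 < r) (le_maxAlong hJc γ) hsteep hNlow).and
    self_mem_nhdsWithin).exists
  have hdist : dist ξ γ ≤ τ :=
    (ContinuousMap.dist_le hτ.le).2 fun s => (dist_eq_norm _ _).trans_le (hξγ s)
  have hξm : maxAlong J ξ ≤ maxAlong J γ - (ε + r) / 2 * τ := maxAlong_le hξ
  refine ⟨ξ, hξN, ?_⟩
  nlinarith [mul_le_mul_of_nonneg_left hdist hε]

theorem exists_almost_critical_of_lt_minimaxLevel [CompleteSpace X] [NormalSpace K]
    {J : X → ℝ} {J' : X → X →L[ℝ] ℝ} (hJ : ∀ x, HasFDerivAt J (J' x) x) (hJ' : Continuous J')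
    {N : Set K} (hN : IsClosed N) (hN₀ : N.Nonempty) (γ₀ : C(K, X)) {b : ℝ}
    (hb : ∀ s ∈ N, J (γ₀ s) ≤ b) (hbc : b < minimaxLevel J N γ₀) {δ : ℝ} (hδ : 0 < δ) :
    ∃ x, |J x - minimaxLevel J N γ₀| < δ ∧ ‖J' x‖ < δ := by
  have hJc : Continuous J := continuous_iff_continuousAt.2 fun x => (hJ x).continuousAt
  set c := minimaxLevel J N γ₀
  set Γ := {γ : C(K, X) | EqOn γ γ₀ N}
  have : CompleteSpace Γ := (ContinuousMap.isClosed_setOf_eqOn γ₀ N).completeSpace_coe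
  have : Nonempty K := hN₀.to_subtype.map Subtype.val
  have : Nonempty Γ := ⟨⟨γ₀, eqOn_refl _ _⟩⟩
  obtain ⟨s₀, hs₀⟩ := hN₀
  have hbdd (γ : Γ) : J (γ₀ s₀) ≤ maxAlong J γ.1 := by
    simpa only [γ.2 hs₀] using le_maxAlong hJc γ.1 s₀
  have hc_le (γ : Γ) : c ≤ maxAlong J γ.1 := ciInf_le ⟨_, forall_mem_range.2 hbdd⟩ γ
  obtain ⟨ε, hε, hεa, hε_sq⟩ := exists_pos_lt_and_sq_lt (lt_min (half_pos hδ) (sub_pos.2 hbc))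
  have hεδ : 2 * ε < δ := by linarith [min_le_left (δ / 2) (c - b)]
  have hε_sqδ : ε ^ 2 < δ := by linarith [min_le_left (δ / 2) (c - b)]
  have hε_sqb : ε ^ 2 < c - b := hε_sq.trans_le (min_le_right _ _)
  obtain ⟨γ₁, hγ₁⟩ : ∃ γ : Γ, maxAlong J γ.1 < c + ε ^ 2 :=
    exists_lt_of_ciInf_lt (lt_add_of_pos_right _ (pow_pos hε 2))
  obtain ⟨γ, hγγ₁, hγ⟩ := ((lowerSemicontinuous_maxAlong hJc).comp continuous_subtype_val)
    |>.exists_forall_le_add_mul_dist ⟨_, forall_mem_range.2 hbdd⟩ hε γ₁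
  set m := maxAlong J γ.1
  have hm : m < c + ε ^ 2 := by
    have : m + ε * dist γ₁ γ ≤ maxAlong J γ₁.1 := hγγ₁
    nlinarith [dist_nonneg (x := γ₁) (y := γ)]
  -- Otherwise `γ` is steep on its high set, and deforming it contradicts Ekeland's inequality.
  by_contra! hcrit
  have hsteep (s : K) (hs : m - ε ^ 2 ≤ J (γ.1 s)) : 2 * ε < ‖J' (γ.1 s)‖ :=
    (by linarith : 2 * ε < δ).trans_le <| hcrit _ <| abs_lt.2
      ⟨by linarith [hc_le γ], by linarith [le_maxAlong hJc γ.1 s]⟩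
  have hNlow (s : K) (hs : s ∈ N) : J (γ.1 s) < m - ε ^ 2 := by
    rw [γ.2 hs]
    linarith [hb s hs, hc_le γ]
  obtain ⟨ξ, hξN, hξ⟩ := exists_maxAlong_add_mul_dist_lt hJ hJ' γ.1 hN (pow_pos hε 2)
    hε.le (by linarith : ε < 2 * ε) hsteep hNlow
  have hξΓ : ξ ∈ Γ := hξN.trans γ.2
  have hEk : m ≤ maxAlong J ξ + ε * dist γ ⟨ξ, hξΓ⟩ := hγ ⟨ξ, hξΓ⟩
  rw [Subtype.dist_eq, dist_comm] at hEk
  exact hξ.not_ge hEk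

end Minimax

section PalaisSmale

variable {X : Type*} [NormedAddCommGroup X] [NormedSpace ℝ X] {J : X → ℝ}
  {J' : X → X →L[ℝ] ℝ}

def PalaisSmaleCondition (J : X → ℝ) (J' : X → X →L[ℝ] ℝ) : Prop :=
  ∀ z : ℕ → X, (∃ μ : ℝ, Tendsto (fun j => J (z j)) atTop (𝓝 μ)) →
    Tendsto (fun j => ‖J' (z j)‖) atTop (𝓝 0) →
    ∃ (w : X) (σ : ℕ → ℕ), StrictMono σ ∧ Tendsto (fun j => z (σ j)) atTop (𝓝 w)

theorem PalaisSmaleCondition.neg (hPS : PalaisSmaleCondition J J') :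
    PalaisSmaleCondition (-J) (-J') := fun z ⟨μ, hμ⟩ h0 =>
  hPS z ⟨-μ, by simpa using hμ.neg⟩ (by simpa using h0)

theorem PalaisSmaleCondition.exists_critical_mem_of_forall_approx
    (hPS : PalaisSmaleCondition J J') (hJ : Continuous J) (hJ' : Continuous J') {S : Set X}
    (hS : IsClosed S) {c : ℝ}
    (h : ∀ δ > 0, ∃ x ∈ thickening δ S, |J x - c| < δ ∧ ‖J' x‖ < δ) :
    ∃ w ∈ S, J' w = 0 ∧ J w = c := by
  choose x hxS hxJ hxJ' using fun n : ℕ => h (1 / (n + 1)) Nat.one_div_pos_of_nat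
  have hδ : Tendsto (fun n : ℕ => 1 / ((n : ℝ) + 1)) atTop (𝓝 0) :=
    tendsto_one_div_add_atTop_nhds_zero_nat
  have hJx : Tendsto (fun n => J (x n)) atTop (𝓝 c) := tendsto_iff_dist_tendsto_zero.2 <|
    squeeze_zero (fun _ => dist_nonneg) (fun n => (hxJ n).le) hδ
  have hJ'x : Tendsto (fun n => ‖J' (x n)‖) atTop (𝓝 0) :=
    squeeze_zero (fun _ => norm_nonneg _) (fun n => (hxJ' n).le) hδ
  obtain ⟨w, σ, hσ, hw⟩ := hPS x ⟨c, hJx⟩ hJ'x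
  refine ⟨w, hS.closure_subset (Metric.mem_closure_iff.2 fun ε hε => ?_),
    norm_eq_zero.1 (tendsto_nhds_unique ((hJ'.tendsto w).comp hw).norm
      (hJ'x.comp hσ.tendsto_atTop)),
    tendsto_nhds_unique ((hJ.tendsto w).comp hw) (hJx.comp hσ.tendsto_atTop)⟩
  obtain ⟨n, hn, hnε⟩ := ((hw.eventually (ball_mem_nhds w (half_pos hε))).and
    ((hδ.comp hσ.tendsto_atTop).eventually (gt_mem_nhds (half_pos hε)))).exists
  obtain ⟨y, hyS, hxy⟩ := mem_thickening_iff.1 (hxS (σ n))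
  refine ⟨y, hyS, ?_⟩
  have := dist_triangle w (x (σ n)) y
  rw [dist_comm] at hn
  simp only [Function.comp_apply] at hnε
  linarith

end PalaisSmale

section CriticalPoints

variable {X : Type*} [NormedAddCommGroup X] [NormedSpace ℝ X] [CompleteSpace X] {J : X → ℝ}
  {J' : X → X →L[ℝ] ℝ}

theorem exists_norm_fderiv_le_of_le_add_sq (hJ : ∀ x, HasFDerivAt J (J' x) x) {B : Set X}
    (hB : IsClosed B) {L : ℝ} (hL : ∀ z ∈ B, L ≤ J z) {x : X} {ε : ℝ} (hε : 0 < ε)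
    (hxB : ball x (2 * ε) ⊆ B) (hx : J x ≤ L + ε ^ 2) :
    ∃ y ∈ B, dist x y ≤ ε ∧ J y ≤ J x ∧ ‖J' y‖ ≤ ε := by
  have hJc : Continuous J := continuous_iff_continuousAt.2 fun x => (hJ x).continuousAt
  have : CompleteSpace B := hB.completeSpace_coe
  obtain ⟨⟨y, hyB⟩, hxy, hy⟩ := (hJc.comp continuous_subtype_val).lowerSemicontinuous
    |>.exists_forall_le_add_mul_dist ⟨L, forall_mem_range.2 fun z : B => hL z.1 z.2⟩ hε
      ⟨x, hxB (mem_ball_self (by positivity))⟩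
  change J y + ε * dist x y ≤ J x at hxy
  have hdist : dist x y ≤ ε := by nlinarith [hL y hyB]
  refine ⟨y, hyB, hdist, by nlinarith [dist_nonneg (x := x) (y := y)], ?_⟩
  refine (hJ y).norm_le_of_isLocalMin_add_mul_dist hε.le <|
    Filter.eventually_of_mem (ball_mem_nhds y hε) fun z hz => ?_
  have hzB : z ∈ B := hxB (mem_ball.2 (by linarith [dist_triangle_right z x y, mem_ball.1 hz]))
  simpa [Subtype.dist_eq] using hy ⟨z, hzB⟩

theorem exists_critical_point_mem_sphere (hJ : ∀ x, HasFDerivAt J (J' x) x)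
    (hJ' : Continuous J') (hPS : PalaisSmaleCondition J J') {u : X} {r R : ℝ} (hrR : r < R)
    (hmin : ∀ x ∈ closedBall u R, J u ≤ J x) (hinf : ∀ δ > 0, ∃ x ∈ sphere u r, J x < J u + δ) :
    ∃ w ∈ sphere u r, J' w = 0 := by
  have hJc : Continuous J := continuous_iff_continuousAt.2 fun x => (hJ x).continuousAt
  suffices happrox : ∀ δ > 0,
      ∃ x ∈ thickening δ (sphere u r), |J x - J u| < δ ∧ ‖J' x‖ < δ by
    obtain ⟨w, hw, hw', -⟩ :=
      hPS.exists_critical_mem_of_forall_approx hJc hJ' isClosed_sphere happrox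
    exact ⟨w, hw, hw'⟩
  intro δ hδ
  obtain ⟨ε, hε, hεa, hε_sq⟩ := exists_pos_lt_and_sq_lt (lt_min hδ (half_pos (sub_pos.2 hrR)))
  have hεδ : ε < δ := hεa.trans_le (min_le_left _ _)
  have hε_sqδ : ε ^ 2 < δ := hε_sq.trans_le (min_le_left _ _)
  have hεR : ε < (R - r) / 2 := hεa.trans_le (min_le_right _ _)
  obtain ⟨x, hx, hJx⟩ := hinf (ε ^ 2) (by positivity)
  have hball : ball x (2 * ε) ⊆ closedBall u R := fun z hz =>
    mem_closedBall.2 (by linarith [dist_triangle z x u, mem_ball.1 hz, mem_sphere.1 hx])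
  obtain ⟨y, hyB, hxy, hJy, hJ'y⟩ :=
    exists_norm_fderiv_le_of_le_add_sq hJ isClosed_closedBall hmin hε hball hJx.le
  refine ⟨y, mem_thickening_iff.2 ⟨x, hx, by rw [dist_comm]; linarith⟩,
    abs_lt.2 ⟨by linarith [hmin y hyB], by linarith⟩, by linarith⟩

theorem exists_critical_point_of_mountain_pass (hJ : ∀ x, HasFDerivAt J (J' x) x)
    (hJ' : Continuous J') (hPS : PalaisSmaleCondition J J') {u₁ u₂ : X} {a : ℝ}
    (h₁ : J u₁ < a) (h₂ : J u₂ < a) (hcross : ∀ γ : Path u₁ u₂, ∃ t, a ≤ J (γ t)) :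
    ∃ w, J' w = 0 ∧ a ≤ J w := by
  have hJc : Continuous J := continuous_iff_continuousAt.2 fun x => (hJ x).continuousAt
  set γ₀ : C(unitInterval, X) := (PathConnectedSpace.somePath u₁ u₂).toContinuousMap
  have hγ₀ : γ₀ 0 = u₁ ∧ γ₀ 1 = u₂ := ⟨Path.source _, Path.target _⟩
  have : Nonempty {γ : C(unitInterval, X) // EqOn γ γ₀ {0, 1}} := ⟨⟨γ₀, eqOn_refl _ _⟩⟩
  have ha : a ≤ minimaxLevel J {0, 1} γ₀ := le_ciInf fun ⟨γ, hγ⟩ => by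
    obtain ⟨t, ht⟩ := hcross ⟨γ, (hγ (by simp)).trans hγ₀.1, (hγ (by simp)).trans hγ₀.2⟩
    exact ht.trans (le_maxAlong hJc γ t)
  suffices happrox : ∀ δ > 0,
      ∃ x ∈ thickening δ univ, |J x - minimaxLevel J {0, 1} γ₀| < δ ∧ ‖J' x‖ < δ by
    obtain ⟨w, -, hw, hwc⟩ :=
      hPS.exists_critical_mem_of_forall_approx hJc hJ' isClosed_univ happrox
    exact ⟨w, hw, hwc ▸ ha⟩
  intro δ hδ
  obtain ⟨x, hx⟩ := exists_almost_critical_of_lt_minimaxLevel hJ hJ' (toFinite _).isClosed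
    (insert_nonempty _ _) γ₀ (b := max (J u₁) (J u₂))
    (by rintro s (rfl | rfl) <;> simp [hγ₀]) ((max_lt h₁ h₂).trans_le ha) hδ
  exact ⟨x, mem_thickening_iff.2 ⟨x, mem_univ x, by simpa using hδ⟩, hx⟩

theorem exists_third_critical_point_of_isLocalMin_of_le (hJ : ∀ x, HasFDerivAt J (J' x) x)
    (hJ' : Continuous J') (hPS : PalaisSmaleCondition J J') {u₁ u₂ : X} (hne : u₁ ≠ u₂)
    (h₁ : IsLocalMin J u₁) (hle : J u₂ ≤ J u₁) : ∃ u₃, J' u₃ = 0 ∧ u₃ ≠ u₁ ∧ u₃ ≠ u₂ := by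
  obtain ⟨R, hR, hmin⟩ := nhds_basis_closedBall.eventually_iff.1 h₁
  have hd : 0 < dist u₂ u₁ := dist_pos.2 hne.symm
  set r := min (R / 2) (dist u₂ u₁ / 2)
  have hr : 0 < r := lt_min (by positivity) (by positivity)
  have hrR : r < R := (min_le_left _ _).trans_lt (by linarith)
  have hr₂ : r < dist u₂ u₁ := (min_le_right _ _).trans_lt (by linarith)
  by_cases hinf : ∀ δ > 0, ∃ x ∈ sphere u₁ r, J x < J u₁ + δ
  · obtain ⟨w, hw, hw'⟩ := exists_critical_point_mem_sphere hJ hJ' hPS hrR hmin hinf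
    refine ⟨w, hw', ne_of_mem_sphere hw hr.ne', ?_⟩
    rintro rfl
    exact hr₂.ne (mem_sphere.1 hw).symm
  push Not at hinf
  obtain ⟨δ, hδ, hsphere⟩ := hinf
  have hcross (γ : Path u₁ u₂) : ∃ t, J u₁ + δ ≤ J (γ t) := by
    obtain ⟨t, ht⟩ := intermediate_value_univ 0 1 (γ.continuous.dist continuous_const)
      (show r ∈ Icc (dist (γ 0) u₁) (dist (γ 1) u₁) by simp [hr.le, hr₂.le])
    exact ⟨t, hsphere _ ht⟩
  obtain ⟨w, hw, hwa⟩ := exists_critical_point_of_mountain_pass hJ hJ' hPS (a := J u₁ + δ)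
    (by linarith) (by linarith) hcross
  exact ⟨w, hw, by rintro rfl; linarith, by rintro rfl; linarith⟩

theorem exists_third_critical_point_of_isLocalMin (hJ : ∀ x, HasFDerivAt J (J' x) x)
    (hJ' : Continuous J') (hPS : PalaisSmaleCondition J J') {u₁ u₂ : X} (hne : u₁ ≠ u₂)
    (h₁ : IsLocalMin J u₁) (h₂ : IsLocalMin J u₂) : ∃ u₃, J' u₃ = 0 ∧ u₃ ≠ u₁ ∧ u₃ ≠ u₂ := by
  rcases le_total (J u₂) (J u₁) with hle | hle
  · exact exists_third_critical_point_of_isLocalMin_of_le hJ hJ' hPS hne h₁ hle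
  · obtain ⟨w, hw, hw₂, hw₁⟩ :=
      exists_third_critical_point_of_isLocalMin_of_le hJ hJ' hPS hne.symm h₂ hle
    exact ⟨w, hw, hw₁, hw₂⟩

end CriticalPoints

/-- **Pucci–Serrin three critical points theorem.** Let `X` be a real Banach space and
`J : X → ℝ` a `C¹` functional (with Fréchet derivative `J'`) satisfying the Palais–Smale
condition. If `u₁ ≠ u₂` are both local minima (or both local maxima) of `J`, then `J`
admits a third critical point `u₃ ∉ {u₁, u₂}`. -/
theorem pucci_serrin_three_critical_points
    {X : Type*} [NormedAddCommGroup X] [NormedSpace ℝ X] [CompleteSpace X]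
    (J : X → ℝ) (J' : X → (X →L[ℝ] ℝ))
    (hdiff : ∀ w : X, HasFDerivAt J (J' w) w) (hcont : Continuous J')
    (hPS : ∀ z : ℕ → X,
      (∃ μ : ℝ, Tendsto (fun j => J (z j)) atTop (𝓝 μ)) →
      Tendsto (fun j => ‖J' (z j)‖) atTop (𝓝 (0 : ℝ)) →
      ∃ (w : X) (σ : ℕ → ℕ), StrictMono σ ∧ Tendsto (fun j => z (σ j)) atTop (𝓝 w))
    (u₁ u₂ : X) (hne : u₁ ≠ u₂)
    (hextrema : (IsLocalMin J u₁ ∧ IsLocalMin J u₂) ∨ (IsLocalMax J u₁ ∧ IsLocalMax J u₂)) :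
    ∃ u₃ : X, J' u₃ = 0 ∧ u₃ ≠ u₁ ∧ u₃ ≠ u₂ := by
  rcases hextrema with ⟨h₁, h₂⟩ | ⟨h₁, h₂⟩
  · exact exists_third_critical_point_of_isLocalMin hdiff hcont hPS hne h₁ h₂
  · obtain ⟨w, hw, hw₁, hw₂⟩ := exists_third_critical_point_of_isLocalMin (J := -J) (J' := -J')
      (fun x => (hdiff x).neg) hcont.neg (PalaisSmaleCondition.neg hPS) hne h₁.neg h₂.neg
    exact ⟨w, neg_eq_zero.1 hw, hw₁, hw₂⟩
end

section
/- Let X be a real normed space, Φ, Ψ : X → ℝ with Φ continuous, and let λ > 0, γ > 0. Suppose S ∈ ℝ satisfies Ψ(z) ≤ S for every z ∈ X with Φ(z) ≤ γ². Suppose w₂ ∈ X is a global minimum of the truncated functional J_λ^{(γ)}, and that there exists v ∈ X with Φ(v) > γ² and Φ(v) − λΨ(v) < γ² − λS. Then Φ(w₂) > γ², and w₂ is a local minimum of the functional J_λ := Φ − λΨ (in particular, if Φ and Ψ are Fréchet differentiable, then w₂ is a critical point of J_λ). -/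
open Filter Topology

/-- The truncated functional `J_λ^{(γ)}`: equal to `γ² − λΨ(w)` on the sublevel set
`{Φ ≤ γ²}` and to `Φ(w) − λΨ(w)` elsewhere. -/
noncomputable def truncatedFunctional {X : Type*} (Φ Ψ : X → ℝ) (lam γ : ℝ) : X → ℝ :=
  fun w => if Φ w ≤ γ ^ 2 then γ ^ 2 - lam * Ψ w else Φ w - lam * Ψ w

/-- If `Φ` is continuous, `Ψ ≤ S` on `{Φ ≤ γ²}`, `w₂` is a global minimum of the truncated
functional `J_λ^{(γ)}`, and there is a `v` with `Φ(v) > γ²` and `Φ(v) − λΨ(v) < γ² − λS`,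
then `Φ(w₂) > γ²` and `w₂` is a local minimum of `J_λ = Φ − λΨ`; in particular whenever
`Φ` and `Ψ` are Fréchet differentiable at `w₂`, `w₂` is a critical point of `J_λ`. -/
theorem global_min_of_truncation_is_local_min
    {X : Type*} [NormedAddCommGroup X] [NormedSpace ℝ X]
    (Φ Ψ : X → ℝ) (hΦcont : Continuous Φ)
    (lam γ : ℝ) (hlam : 0 < lam) (hγ : 0 < γ)
    (S : ℝ) (hS : ∀ z : X, Φ z ≤ γ ^ 2 → Ψ z ≤ S)
    (w₂ : X) (hmin : ∀ w : X, truncatedFunctional Φ Ψ lam γ w₂ ≤ truncatedFunctional Φ Ψ lam γ w)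
    (v : X) (hv1 : γ ^ 2 < Φ v) (hv2 : Φ v - lam * Ψ v < γ ^ 2 - lam * S) :
    γ ^ 2 < Φ w₂ ∧
      IsLocalMin (fun w : X => Φ w - lam * Ψ w) w₂ ∧
      (∀ Φ'w₂ Ψ'w₂ : X →L[ℝ] ℝ, HasFDerivAt Φ Φ'w₂ w₂ → HasFDerivAt Ψ Ψ'w₂ w₂ →
        Φ'w₂ = lam • Ψ'w₂) := by
  have hJv : truncatedFunctional Φ Ψ lam γ v = Φ v - lam * Ψ v := by
    simp [truncatedFunctional, not_le.2 hv1]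
  have hw2 : γ ^ 2 < Φ w₂ := by
    by_contra h
    push_neg at h
    have h1 : truncatedFunctional Φ Ψ lam γ w₂ = γ ^ 2 - lam * Ψ w₂ := by
      simp [truncatedFunctional, h]
    have h2 := hmin v
    rw [h1, hJv] at h2
    have h3 : lam * Ψ w₂ ≤ lam * S := by
      exact mul_le_mul_of_nonneg_left (hS _ h) hlam.le
    linarith
  have hJw₂ : truncatedFunctional Φ Ψ lam γ w₂ = Φ w₂ - lam * Ψ w₂ := by
    simp [truncatedFunctional, not_le.2 hw2]
  have hloc : IsLocalMin (fun w : X => Φ w - lam * Ψ w) w₂ := by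
    have hopen : IsOpen {w : X | γ ^ 2 < Φ w} := isOpen_lt continuous_const hΦcont
    filter_upwards [hopen.mem_nhds hw2] with w hw
    have hJw : truncatedFunctional Φ Ψ lam γ w = Φ w - lam * Ψ w := by
      simp [truncatedFunctional, not_le.2 hw]
    have := hmin w
    rw [hJw₂, hJw] at this
    exact this
  refine ⟨hw2, hloc, fun Φ' Ψ' hΦ' hΨ' => ?_⟩
  have hd : HasFDerivAt (fun w : X => Φ w - lam * Ψ w) (Φ' - lam • Ψ') w₂ :=
    hΦ'.sub ((hΨ'.const_mul lam))
  have := hloc.hasFDerivAt_eq_zero hd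
  rw [sub_eq_zero] at this
  exact this
end

section
/- Let n ≥ 2, let Ω ⊂ ℝⁿ be a bounded open set, x₀ ∈ Ω and τ > 0 with the open ball B(x₀, τ) contained in Ω, and let ϱ > 0. Define w_τ^ϱ(x, y) := e^{−y/2}·ω_τ^ϱ(x) for (x, y) ∈ Ω × (0, +∞), and set g := 2·ω_n·τ^{n−2}·(1 − 2^{−n}). Then 2g·ϱ² ≤ ∫_{Ω×(0,+∞)} |∇w_τ^ϱ(x, y)|² dx dy ≤ (2g + |Ω|/4)·ϱ², where |Ω| is the Lebesgue measure of Ω. In particular, if γ > 0 satisfies g·ϱ² > γ², then (1/2)∫_{Ω×(0,+∞)} |∇w_τ^ϱ|² dx dy > γ². -/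
open Filter Topology MeasureTheory

/-- The truncated cone `ω_τ^ϱ` centered at `x₀`. -/
noncomputable def truncatedCone {n : ℕ} (x₀ : EuclideanSpace ℝ (Fin n)) (τ ϱ : ℝ) :
    EuclideanSpace ℝ (Fin n) → ℝ := fun x =>
  if dist x x₀ ≤ τ / 2 then ϱ
  else if dist x x₀ < τ then (2 * ϱ / τ) * (τ - dist x x₀)
  else 0

/-- `ω_n = π^{n/2}/Γ(1 + n/2)`, the Lebesgue measure of the unit ball of `ℝⁿ`. -/
noncomputable def unitBallVolume (n : ℕ) : ℝ :=
  Real.pi ^ ((n : ℝ) / 2) / Real.Gamma (1 + (n : ℝ) / 2)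

/-- Projection of a point of `ℝ^{n+1}` onto its first `n` coordinates. -/
noncomputable def projFirst {n : ℕ} (p : EuclideanSpace ℝ (Fin (n + 1))) :
    EuclideanSpace ℝ (Fin n) := WithLp.toLp 2 (fun i : Fin n => p i.castSucc)

/-- The last coordinate of a point of `ℝ^{n+1}`. -/
noncomputable def lastCoord {n : ℕ} (p : EuclideanSpace ℝ (Fin (n + 1))) : ℝ :=
  p (Fin.last n)

/-- The function `w_τ^ϱ(x, y) = e^{−y/2}·ω_τ^ϱ(x)` on `ℝⁿ × (0, ∞) ⊆ ℝ^{n+1}`. -/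
noncomputable def cylinderFun {n : ℕ} (x₀ : EuclideanSpace ℝ (Fin n)) (τ ϱ : ℝ) :
    EuclideanSpace ℝ (Fin (n + 1)) → ℝ := fun p =>
  Real.exp (-(lastCoord p) / 2) * truncatedCone x₀ τ ϱ (projFirst p)

/-!
Off the null set `{|x - x₀| ∈ {τ/2, τ}} × ℝ` the chain rule gives
`|∇w|² = e^{-y} (|∇ω|² + ω²/4)`, and `∫₀^∞ e^{-y} dy = 1`, so by Fubini the integral equals
`∫_Ω |∇ω|² + ∫_Ω ω²/4`. The gradient of the cone has norm `2ϱ/τ` on the annulus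
`τ/2 < |x - x₀| < τ` and vanishes elsewhere, so the first term is
`(2ϱ/τ)² ω_n τⁿ (1 - 2⁻ⁿ) = 2gϱ²`, while `0 ≤ ω² ≤ ϱ²` bounds the second by `|Ω| ϱ² / 4`.
-/

open Filter Topology MeasureTheory Metric

section Coordinates

variable {n : ℕ}

noncomputable def projFirstCLM (n : ℕ) :
    EuclideanSpace ℝ (Fin (n + 1)) →L[ℝ] EuclideanSpace ℝ (Fin n) :=
  LinearMap.toContinuousLinearMap
    { toFun := projFirst
      map_add' := fun _ _ => rfl
      map_smul' := fun _ _ => rfl }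

noncomputable def lastCoordCLM (n : ℕ) : EuclideanSpace ℝ (Fin (n + 1)) →L[ℝ] ℝ :=
  EuclideanSpace.proj (Fin.last n)

@[simp] lemma projFirstCLM_apply (p : EuclideanSpace ℝ (Fin (n + 1))) :
    projFirstCLM n p = projFirst p := rfl

@[simp] lemma lastCoordCLM_apply (p : EuclideanSpace ℝ (Fin (n + 1))) :
    lastCoordCLM n p = lastCoord p := rfl

lemma norm_comp_projFirstCLM_add_smul_lastCoordCLM_sq
    (ℓ : EuclideanSpace ℝ (Fin n) →L[ℝ] ℝ) (a : ℝ) :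
    ‖ℓ.comp (projFirstCLM n) + a • lastCoordCLM n‖ ^ 2 = ‖ℓ‖ ^ 2 + a ^ 2 := by
  set w := (InnerProductSpace.toDual ℝ _).symm ℓ
  set v : EuclideanSpace ℝ (Fin (n + 1)) := WithLp.toLp 2 (Fin.snoc (α := fun _ => ℝ) w a)
  have hℓ : ‖ℓ‖ = ‖w‖ := (LinearIsometryEquiv.norm_map _ ℓ).symm
  have hv : ℓ.comp (projFirstCLM n) + a • lastCoordCLM n = innerSL ℝ v := by
    have hw : ∀ x, ℓ x = inner ℝ w x := fun x => InnerProductSpace.toDual_symm_apply.symm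
    ext q
    simp [hw, v, PiLp.inner_apply, Fin.sum_univ_castSucc, projFirst, lastCoord, mul_comm]
  rw [hv, innerSL_apply_norm, hℓ, EuclideanSpace.norm_sq_eq, EuclideanSpace.norm_sq_eq,
    Fin.sum_univ_castSucc]
  simp [v]

end Coordinates

section ExpWeight

variable {n : ℕ} {f : EuclideanSpace ℝ (Fin n) → ℝ} {ℓ : EuclideanSpace ℝ (Fin n) →L[ℝ] ℝ}
  {p : EuclideanSpace ℝ (Fin (n + 1))}

lemma hasFDerivAt_exp_neg_half_lastCoord (p : EuclideanSpace ℝ (Fin (n + 1))) :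
    HasFDerivAt (fun q => Real.exp (-lastCoord q / 2))
      ((-(Real.exp (-lastCoord p / 2) / 2)) • lastCoordCLM n) p := by
  refine ((((hasDerivAt_id' _).neg.div_const 2).exp).comp_hasFDerivAt p
    (lastCoordCLM n).hasFDerivAt).congr_fderiv ?_
  rw [lastCoordCLM_apply, neg_div]
  congr 1
  ring

lemma hasFDerivAt_exp_mul_comp_projFirst (hf : HasFDerivAt f ℓ (projFirst p)) :
    HasFDerivAt (fun q => Real.exp (-lastCoord q / 2) * f (projFirst q))
      ((Real.exp (-lastCoord p / 2) • ℓ).comp (projFirstCLM n)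
        + (-(Real.exp (-lastCoord p / 2) * f (projFirst p) / 2)) • lastCoordCLM n) p := by
  refine ((hasFDerivAt_exp_neg_half_lastCoord p).mul
    (hf.comp p (projFirstCLM n).hasFDerivAt)).congr_fderiv ?_
  ext q
  simp only [add_apply, ContinuousLinearMap.coe_comp,
    FunLike.coe_smul, Function.comp_apply, Pi.smul_apply, smul_eq_mul]
  ring

lemma norm_fderiv_exp_mul_comp_projFirst_sq (hf : HasFDerivAt f ℓ (projFirst p)) :
    ‖fderiv ℝ (fun q => Real.exp (-lastCoord q / 2) * f (projFirst q)) p‖ ^ 2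
      = Real.exp (-lastCoord p) * (‖ℓ‖ ^ 2 + f (projFirst p) ^ 2 / 4) := by
  have hexp : Real.exp (-lastCoord p / 2) ^ 2 = Real.exp (-lastCoord p) := by
    rw [sq, ← Real.exp_add]; congr 1; ring
  rw [(hasFDerivAt_exp_mul_comp_projFirst hf).fderiv,
    norm_comp_projFirstCLM_add_smul_lastCoordCLM_sq, norm_smul, Real.norm_eq_abs,
    abs_of_pos (Real.exp_pos _), ← hexp]
  ring

end ExpWeight

section Cone

variable {n : ℕ} {x₀ x : EuclideanSpace ℝ (Fin n)} {τ : ℝ} (ϱ : ℝ)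

lemma truncatedCone_eventuallyEq_of_lt_half (hx : dist x x₀ < τ / 2) :
    truncatedCone x₀ τ ϱ =ᶠ[𝓝 x] fun _ => ϱ := by
  filter_upwards [isOpen_ball.mem_nhds (mem_ball.2 hx)] with y hy
  exact if_pos (mem_ball.1 hy).le

lemma truncatedCone_eventuallyEq_of_gt (hτ : 0 < τ) (hx : τ < dist x x₀) :
    truncatedCone x₀ τ ϱ =ᶠ[𝓝 x] fun _ => 0 := by
  filter_upwards [isClosed_closedBall.isOpen_compl.mem_nhds
    (show x ∉ closedBall x₀ τ from fun h => (mem_closedBall.1 h).not_gt hx)] with y hy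
  have hy : τ < dist y x₀ := lt_of_not_ge hy
  simp only [truncatedCone, if_neg (show ¬dist y x₀ ≤ τ / 2 by linarith), if_neg hy.not_gt]

lemma truncatedCone_eventuallyEq_of_mem_annulus
    (hx : x ∈ ball x₀ τ \ closedBall x₀ (τ / 2)) :
    truncatedCone x₀ τ ϱ =ᶠ[𝓝 x] fun y => 2 * ϱ / τ * (τ - ‖y - x₀‖) := by
  filter_upwards [(isOpen_ball.sdiff isClosed_closedBall).mem_nhds hx] with y ⟨hyτ, hyτ₂⟩
  simp only [truncatedCone, if_neg (fun h => hyτ₂ (mem_closedBall.2 h)),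
    if_pos (mem_ball.1 hyτ)]
  rw [dist_eq_norm]

lemma exists_hasFDerivAt_truncatedCone (hτ : 0 < τ) (hx₁ : dist x x₀ ≠ τ / 2)
    (hx₂ : dist x x₀ ≠ τ) :
    ∃ ℓ : EuclideanSpace ℝ (Fin n) →L[ℝ] ℝ, HasFDerivAt (truncatedCone x₀ τ ϱ) ℓ x ∧
      ‖ℓ‖ ^ 2 = (ball x₀ τ \ ball x₀ (τ / 2)).indicator (fun _ => (2 * ϱ / τ) ^ 2) x := by
  rcases hx₁.lt_or_gt with hin | hmid
  · refine ⟨0, (hasFDerivAt_const ϱ x).congr_of_eventuallyEq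
      (truncatedCone_eventuallyEq_of_lt_half ϱ hin), ?_⟩
    rw [Set.indicator_of_notMem (fun h => h.2 (mem_ball.2 hin))]
    simp
  rcases hx₂.lt_or_gt with hmid' | hout
  · have hx : x ∈ ball x₀ τ \ closedBall x₀ (τ / 2) :=
      ⟨mem_ball.2 hmid', fun h => (mem_closedBall.1 h).not_gt hmid⟩
    have hne : x - x₀ ≠ 0 := sub_ne_zero.2 fun h => by rw [h, dist_self] at hmid; linarith
    have : Nontrivial (EuclideanSpace ℝ (Fin n)) := nontrivial_of_ne _ _ hne
    have hnorm := (contDiffAt_norm ℝ (n := 1) hne).differentiableAt one_ne_zero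
    refine ⟨-(2 * ϱ / τ) • fderiv ℝ (‖·‖) (x - x₀), ?_, ?_⟩
    · refine HasFDerivAt.congr_of_eventuallyEq ?_ (truncatedCone_eventuallyEq_of_mem_annulus ϱ hx)
      have := ((hnorm.hasFDerivAt.comp x ((hasFDerivAt_id x).sub_const x₀)).const_sub τ).const_mul
        (2 * ϱ / τ)
      exact this.congr_fderiv (by ext v; simp)
    · rw [Set.indicator_of_mem (Set.sdiff_subset_sdiff_right ball_subset_closedBall hx),
        norm_smul, norm_fderiv_norm hnorm, norm_neg, Real.norm_eq_abs, mul_one, sq_abs]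
  · refine ⟨0, (hasFDerivAt_const 0 x).congr_of_eventuallyEq
      (truncatedCone_eventuallyEq_of_gt ϱ hτ hout), ?_⟩
    rw [Set.indicator_of_notMem (fun h => (mem_ball.1 h.1).not_gt hout)]
    simp

end Cone

section Fubini

variable {n : ℕ}

noncomputable def splitLastCoord (n : ℕ) :
    EuclideanSpace ℝ (Fin (n + 1)) ≃ᵐ ℝ × EuclideanSpace ℝ (Fin n) :=
  (MeasurableEquiv.toLp 2 (Fin (n + 1) → ℝ)).symm.trans
    ((MeasurableEquiv.piFinSuccAbove (fun _ => ℝ) (Fin.last n)).trans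
      ((MeasurableEquiv.refl ℝ).prodCongr (MeasurableEquiv.toLp 2 (Fin n → ℝ))))

@[simp] lemma splitLastCoord_apply (p : EuclideanSpace ℝ (Fin (n + 1))) :
    splitLastCoord n p = (lastCoord p, projFirst p) := by
  refine Prod.ext rfl ?_
  ext i
  exact congrArg p (Fin.succAbove_last_apply i)

lemma measurePreserving_splitLastCoord (n : ℕ) :
    MeasurePreserving (splitLastCoord n) volume (volume.prod volume) :=
  ((MeasurePreserving.id volume).prod
    (EuclideanSpace.volume_preserving_symm_measurableEquiv_toLp (Fin n)).symm).comp
    ((volume_preserving_piFinSuccAbove (fun _ => ℝ) (Fin.last n)).comp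
      (EuclideanSpace.volume_preserving_symm_measurableEquiv_toLp (Fin (n + 1))))

lemma quasiMeasurePreserving_projFirst (n : ℕ) :
    Measure.QuasiMeasurePreserving (projFirst (n := n)) volume volume := by
  have h : projFirst (n := n) = Prod.snd ∘ splitLastCoord n := by funext p; simp
  rw [h]
  exact Measure.quasiMeasurePreserving_snd.comp
    (measurePreserving_splitLastCoord n).quasiMeasurePreserving

lemma setIntegral_mul_lastCoord_projFirst (s : Set (EuclideanSpace ℝ (Fin n))) (t : Set ℝ)
    (f : EuclideanSpace ℝ (Fin n) → ℝ) (g : ℝ → ℝ) :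
    ∫ p in {p : EuclideanSpace ℝ (Fin (n + 1)) | projFirst p ∈ s ∧ lastCoord p ∈ t},
        g (lastCoord p) * f (projFirst p)
      = (∫ y in t, g y) * ∫ x in s, f x := by
  have hset : {p : EuclideanSpace ℝ (Fin (n + 1)) | projFirst p ∈ s ∧ lastCoord p ∈ t}
      = splitLastCoord n ⁻¹' (t ×ˢ s) := by
    ext p; simp [and_comm]
  have h := (measurePreserving_splitLastCoord n).setIntegral_preimage_emb
    (splitLastCoord n).measurableEmbedding (fun z => g z.1 * f z.2) (t ×ˢ s)
  simp only [splitLastCoord_apply] at h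
  rw [hset, h, ← Measure.prod_restrict]
  exact integral_prod_mul g f

end Fubini

section Energy

variable {n : ℕ} (x₀ : EuclideanSpace ℝ (Fin n)) (τ ϱ : ℝ)

/-- `|∇ω_τ^ϱ|² + (ω_τ^ϱ)² / 4`, valid off the spheres `|x - x₀| = τ/2` and `|x - x₀| = τ`. -/
noncomputable def truncatedConeEnergy (x : EuclideanSpace ℝ (Fin n)) : ℝ :=
  (ball x₀ τ \ ball x₀ (τ / 2)).indicator (fun _ => (2 * ϱ / τ) ^ 2) x
    + truncatedCone x₀ τ ϱ x ^ 2 / 4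

lemma ae_norm_fderiv_cylinderFun_sq [NeZero n] (hτ : 0 < τ) :
    ∀ᵐ p ∂(volume : Measure (EuclideanSpace ℝ (Fin (n + 1)))),
      ‖fderiv ℝ (cylinderFun x₀ τ ϱ) p‖ ^ 2
        = Real.exp (-lastCoord p) * truncatedConeEnergy x₀ τ ϱ (projFirst p) := by
  have hspheres : ∀ᵐ x ∂(volume : Measure (EuclideanSpace ℝ (Fin n))),
      x ∉ sphere x₀ (τ / 2) ∧ x ∉ sphere x₀ τ :=
    (measure_eq_zero_iff_ae_notMem.1 (Measure.addHaar_sphere volume x₀ (τ / 2))).and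
      (measure_eq_zero_iff_ae_notMem.1 (Measure.addHaar_sphere volume x₀ τ))
  filter_upwards [(quasiMeasurePreserving_projFirst n).ae hspheres] with p ⟨hp₁, hp₂⟩
  obtain ⟨ℓ, hℓ, hℓnorm⟩ := exists_hasFDerivAt_truncatedCone ϱ hτ hp₁ hp₂
  rw [truncatedConeEnergy, ← hℓnorm]
  exact norm_fderiv_exp_mul_comp_projFirst_sq hℓ

lemma truncatedCone_sq_le (x : EuclideanSpace ℝ (Fin n)) : truncatedCone x₀ τ ϱ x ^ 2 ≤ ϱ ^ 2 := by
  unfold truncatedCone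
  split_ifs with h₁ h₂
  · rfl
  · replace h₁ := lt_of_not_ge h₁
    have hτ : 0 < τ := by linarith [dist_nonneg (x := x) (y := x₀)]
    have hk : 2 * (τ - dist x x₀) / τ ≤ 1 := by rw [div_le_one hτ]; linarith
    calc (2 * ϱ / τ * (τ - dist x x₀)) ^ 2 = ϱ ^ 2 * (2 * (τ - dist x x₀) / τ) ^ 2 := by ring
      _ ≤ ϱ ^ 2 * 1 := by gcongr; exact pow_le_one₀ (by positivity) hk
      _ = ϱ ^ 2 := mul_one _
  · rw [zero_pow two_ne_zero]; positivity

lemma measurable_truncatedCone : Measurable (truncatedCone x₀ τ ϱ) := by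
  refine Measurable.ite ?_ measurable_const (Measurable.ite ?_ ?_ measurable_const)
  · exact measurableSet_le (measurable_id.dist measurable_const) measurable_const
  · exact measurableSet_lt (measurable_id.dist measurable_const) measurable_const
  · fun_prop

lemma measureReal_ball_eq_unitBallVolume [NeZero n] {r : ℝ} (hr : 0 ≤ r) :
    volume.real (ball x₀ r) = unitBallVolume n * r ^ n := by
  have hsqrt : Real.sqrt Real.pi ^ n = Real.pi ^ ((n : ℝ) / 2) := by
    rw [Real.sqrt_eq_rpow, ← Real.rpow_natCast, ← Real.rpow_mul Real.pi_pos.le, one_div_mul_eq_div]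
  have hΓ := Real.Gamma_pos_of_pos (show (0 : ℝ) < n / 2 + 1 by positivity)
  rw [measureReal_def, EuclideanSpace.volume_ball, Fintype.card_fin, ENNReal.toReal_mul,
    ← ENNReal.ofReal_pow hr, ENNReal.toReal_ofReal (by positivity),
    ENNReal.toReal_ofReal (by positivity), hsqrt, unitBallVolume, add_comm (1 : ℝ), mul_comm]

lemma measureReal_ball_sdiff_ball_half [NeZero n] (hτ : 0 ≤ τ) :
    volume.real (ball x₀ τ \ ball x₀ (τ / 2)) = unitBallVolume n * τ ^ n * (1 - 1 / 2 ^ n) := by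
  rw [measureReal_sdiff (ball_subset_ball (by linarith)) measurableSet_ball
      measure_ball_lt_top.ne, measureReal_ball_eq_unitBallVolume x₀ hτ,
    measureReal_ball_eq_unitBallVolume x₀ (by linarith), div_pow]
  ring

lemma integrableOn_truncatedCone_sq_div_four {Ω : Set (EuclideanSpace ℝ (Fin n))}
    (hΩ : volume Ω ≠ ⊤) : IntegrableOn (fun x => truncatedCone x₀ τ ϱ x ^ 2 / 4) Ω :=
  Measure.integrableOn_of_bounded (M := ϱ ^ 2 / 4) hΩ
    ((measurable_truncatedCone x₀ τ ϱ).pow_const 2 |>.div_const 4).aestronglyMeasurable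
    (ae_of_all _ fun x => by
      rw [Real.norm_of_nonneg (by positivity)]
      linarith [truncatedCone_sq_le x₀ τ ϱ x])

lemma setIntegral_truncatedConeEnergy {Ω : Set (EuclideanSpace ℝ (Fin n))}
    (hΩ : volume Ω ≠ ⊤) (hball : ball x₀ τ ⊆ Ω) :
    ∫ x in Ω, truncatedConeEnergy x₀ τ ϱ x
      = (2 * ϱ / τ) ^ 2 * volume.real (ball x₀ τ \ ball x₀ (τ / 2))
        + ∫ x in Ω, truncatedCone x₀ τ ϱ x ^ 2 / 4 := by
  have hA : MeasurableSet (ball x₀ τ \ ball x₀ (τ / 2)) := measurableSet_ball.diff measurableSet_ball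
  have hAfin : volume (ball x₀ τ \ ball x₀ (τ / 2)) ≠ ⊤ :=
    measure_ne_top_of_subset Set.sdiff_subset measure_ball_lt_top.ne
  have hind : IntegrableOn ((ball x₀ τ \ ball x₀ (τ / 2)).indicator fun _ => (2 * ϱ / τ) ^ 2) Ω :=
    ((integrable_indicator_iff hA).2 (integrableOn_const hAfin)).integrableOn
  unfold truncatedConeEnergy
  rw [integral_add hind (integrableOn_truncatedCone_sq_div_four x₀ τ ϱ hΩ),
    setIntegral_indicator hA, Set.inter_eq_right.2 (Set.sdiff_subset.trans hball),
    setIntegral_const, smul_eq_mul, mul_comm]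

lemma setIntegral_truncatedCone_sq_div_four_le {Ω : Set (EuclideanSpace ℝ (Fin n))}
    (hΩ : volume Ω ≠ ⊤) :
    ∫ x in Ω, truncatedCone x₀ τ ϱ x ^ 2 / 4 ≤ volume.real Ω / 4 * ϱ ^ 2 := by
  calc ∫ x in Ω, truncatedCone x₀ τ ϱ x ^ 2 / 4
      ≤ ∫ _ in Ω, ϱ ^ 2 / 4 :=
        setIntegral_mono (integrableOn_truncatedCone_sq_div_four x₀ τ ϱ hΩ)
          (integrableOn_const hΩ) fun x => by linarith [truncatedCone_sq_le x₀ τ ϱ x]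
    _ = volume.real Ω / 4 * ϱ ^ 2 := by rw [setIntegral_const, smul_eq_mul]; ring

end Energy

theorem cylinderFun_gradient_integral_bounds_general
    {n : ℕ} (hn : 2 ≤ n) (Ω : Set (EuclideanSpace ℝ (Fin n)))
    (hΩbdd : Bornology.IsBounded Ω)
    (x₀ : EuclideanSpace ℝ (Fin n))
    (τ : ℝ) (hτ : 0 < τ) (hball : Metric.ball x₀ τ ⊆ Ω)
    (ϱ : ℝ) :
    (2 * (2 * unitBallVolume n * τ ^ (n - 2) * (1 - 1 / 2 ^ n)) * ϱ ^ 2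
      ≤ ∫ p in {p : EuclideanSpace ℝ (Fin (n + 1)) | projFirst p ∈ Ω ∧ 0 < lastCoord p},
          ‖fderiv ℝ (cylinderFun x₀ τ ϱ) p‖ ^ 2 ∂volume) ∧
    (∫ p in {p : EuclideanSpace ℝ (Fin (n + 1)) | projFirst p ∈ Ω ∧ 0 < lastCoord p},
        ‖fderiv ℝ (cylinderFun x₀ τ ϱ) p‖ ^ 2 ∂volume
      ≤ (2 * (2 * unitBallVolume n * τ ^ (n - 2) * (1 - 1 / 2 ^ n))
          + (volume Ω).toReal / 4) * ϱ ^ 2) ∧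
    (∀ γ : ℝ, 0 < γ →
      γ ^ 2 < 2 * unitBallVolume n * τ ^ (n - 2) * (1 - 1 / 2 ^ n) * ϱ ^ 2 →
      γ ^ 2 < (1 / 2) *
        ∫ p in {p : EuclideanSpace ℝ (Fin (n + 1)) | projFirst p ∈ Ω ∧ 0 < lastCoord p},
          ‖fderiv ℝ (cylinderFun x₀ τ ϱ) p‖ ^ 2 ∂volume) := by
  have : NeZero n := ⟨by omega⟩
  have hΩ : volume Ω ≠ ⊤ := hΩbdd.measure_lt_top.ne
  have hI : ∫ p in {p : EuclideanSpace ℝ (Fin (n + 1)) | projFirst p ∈ Ω ∧ 0 < lastCoord p},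
        ‖fderiv ℝ (cylinderFun x₀ τ ϱ) p‖ ^ 2 ∂volume
      = ∫ x in Ω, truncatedConeEnergy x₀ τ ϱ x := by
    rw [integral_congr_ae (ae_restrict_of_ae (ae_norm_fderiv_cylinderFun_sq x₀ τ ϱ hτ))]
    refine (setIntegral_mul_lastCoord_projFirst Ω (Set.Ioi 0) _ (fun y => Real.exp (-y))).trans ?_
    rw [integral_exp_neg_Ioi_zero, one_mul]
  have hτn : τ ^ n = τ ^ (n - 2) * τ ^ 2 := by rw [← pow_add, Nat.sub_add_cancel hn]
  have hgrad : (2 * ϱ / τ) ^ 2 * volume.real (ball x₀ τ \ ball x₀ (τ / 2))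
      = 2 * (2 * unitBallVolume n * τ ^ (n - 2) * (1 - 1 / 2 ^ n)) * ϱ ^ 2 := by
    rw [measureReal_ball_sdiff_ball_half x₀ τ hτ.le, hτn]
    field_simp
  have hlow : 0 ≤ ∫ x in Ω, truncatedCone x₀ τ ϱ x ^ 2 / 4 := integral_nonneg fun _ => by positivity
  have hup := setIntegral_truncatedCone_sq_div_four_le x₀ τ ϱ hΩ
  rw [measureReal_def] at hup
  rw [hI, setIntegral_truncatedConeEnergy x₀ τ ϱ hΩ hball, hgrad]
  exact ⟨by linarith, by linarith, fun γ _ hγ => by linarith⟩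

/-- With `g = 2·ω_n·τ^{n−2}(1 − 2^{−n})`, one has
`2gϱ² ≤ ∫_{Ω×(0,∞)} |∇w_τ^ϱ|² ≤ (2g + |Ω|/4)ϱ²`; in particular, if `gϱ² > γ²` then
`(1/2)∫_{Ω×(0,∞)} |∇w_τ^ϱ|² > γ²`. -/
theorem cylinderFun_gradient_integral_bounds
    {n : ℕ} (hn : 2 ≤ n) (Ω : Set (EuclideanSpace ℝ (Fin n)))
    (hΩopen : IsOpen Ω) (hΩbdd : Bornology.IsBounded Ω)
    (x₀ : EuclideanSpace ℝ (Fin n)) (hx₀ : x₀ ∈ Ω)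
    (τ : ℝ) (hτ : 0 < τ) (hball : Metric.ball x₀ τ ⊆ Ω)
    (ϱ : ℝ) (hϱ : 0 < ϱ) :
    (2 * (2 * unitBallVolume n * τ ^ (n - 2) * (1 - 1 / 2 ^ n)) * ϱ ^ 2
      ≤ ∫ p in {p : EuclideanSpace ℝ (Fin (n + 1)) | projFirst p ∈ Ω ∧ 0 < lastCoord p},
          ‖fderiv ℝ (cylinderFun x₀ τ ϱ) p‖ ^ 2 ∂volume) ∧
    (∫ p in {p : EuclideanSpace ℝ (Fin (n + 1)) | projFirst p ∈ Ω ∧ 0 < lastCoord p},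
        ‖fderiv ℝ (cylinderFun x₀ τ ϱ) p‖ ^ 2 ∂volume
      ≤ (2 * (2 * unitBallVolume n * τ ^ (n - 2) * (1 - 1 / 2 ^ n))
          + (volume Ω).toReal / 4) * ϱ ^ 2) ∧
    (∀ γ : ℝ, 0 < γ →
      γ ^ 2 < 2 * unitBallVolume n * τ ^ (n - 2) * (1 - 1 / 2 ^ n) * ϱ ^ 2 →
      γ ^ 2 < (1 / 2) *
        ∫ p in {p : EuclideanSpace ℝ (Fin (n + 1)) | projFirst p ∈ Ω ∧ 0 < lastCoord p},
          ‖fderiv ℝ (cylinderFun x₀ τ ϱ) p‖ ^ 2 ∂volume) :=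
  cylinderFun_gradient_integral_bounds_general hn Ω hΩbdd x₀ τ hτ hball ϱ
end

section
/- Let X be a real Hilbert space and Ψ : X → ℝ a continuously Fréchet differentiable functional such that: (i) Ψ(w) ≤ b·(1 + ‖w‖^l) for all w ∈ X, for some constants b > 0 and 0 < l < 2; (ii) for every bounded sequence {w_j} ⊂ X converging weakly to some w_∞ ∈ X, one has Ψ'(w_j)(w_j − w_∞) → 0 as j → +∞. Then for every λ > 0 the functional J_λ(w) := (1/2)‖w‖² − λΨ(w) is bounded from below, coercive (J_λ(w) → +∞ as ‖w‖ → +∞), and satisfies the Palais–Smale condition. -/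
/-!
The growth bound on `Ψ` gives `J_λ(w) ≥ ‖w‖²/4 - C`, which yields boundedness from below,
coercivity, and boundedness of every Palais–Smale sequence `(z_j)`. In a Hilbert space a
bounded sequence has a weakly convergent subsequence `z_j ⇀ w`, and then
`‖z_j - w‖² = ⟪z_j, z_j - w⟫ - ⟪w, z_j - w⟫`: the second term tends to `0` by weak
convergence, the first is `J_λ'(z_j)(z_j - w) + λ Ψ'(z_j)(z_j - w)`, which tends to `0`
because `J_λ'(z_j) → 0` and by the hypothesis on `Ψ'`.
-/

open Filter Topology InnerProductSpace Bornology

theorem exists_rpow_le_mul_sq_add {l ε : ℝ} (hl0 : 0 ≤ l) (hl2 : l < 2) (hε : 0 < ε) :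
    ∃ C, ∀ t : ℝ, 0 ≤ t → t ^ l ≤ ε * t ^ 2 + C := by
  obtain ⟨T, hT⟩ := eventually_atTop.1
    ((tendsto_rpow_neg_atTop (sub_pos.2 hl2)).eventually (ge_mem_nhds hε))
  refine ⟨max T 1 ^ l, fun t ht => ?_⟩
  rcases le_total t (max T 1) with hle | hge
  · have hTl : t ^ l ≤ max T 1 ^ l := Real.rpow_le_rpow ht hle hl0
    nlinarith [sq_nonneg t]
  · have ht0 : 0 < t := zero_lt_one.trans_le ((le_max_right T 1).trans hge)
    have hsplit : t ^ l = t ^ (-(2 - l)) * t ^ 2 := by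
      rw [← Real.rpow_natCast, ← Real.rpow_add ht0]
      norm_num
    have hdecay : t ^ (-(2 - l)) ≤ ε := hT t ((le_max_left T 1).trans hge)
    nlinarith [Real.rpow_nonneg (zero_le_one.trans (le_max_right T 1)) l, sq_nonneg t]

theorem exists_quarter_sq_sub_le_energy {X : Type*} [SeminormedAddCommGroup X] {Ψ : X → ℝ}
    {b l lam : ℝ} (hb : 0 ≤ b) (hl0 : 0 ≤ l) (hl2 : l < 2) (hlam : 0 ≤ lam)
    (hgrowth : ∀ w, Ψ w ≤ b * (1 + ‖w‖ ^ l)) :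
    ∃ C, ∀ w, 1 / 4 * ‖w‖ ^ 2 - C ≤ 1 / 2 * ‖w‖ ^ 2 - lam * Ψ w := by
  have hlb : 0 ≤ lam * b := mul_nonneg hlam hb
  obtain ⟨C, hC⟩ := exists_rpow_le_mul_sq_add hl0 hl2 (ε := 1 / (4 * (lam * b + 1)))
    (by positivity)
  refine ⟨lam * b * (1 + C), fun w => ?_⟩
  have hε : lam * b * (1 / (4 * (lam * b + 1))) ≤ 1 / 4 := by
    rw [mul_one_div, div_le_div_iff₀ (by positivity) (by norm_num)]
    linarith
  have h1 := mul_le_mul_of_nonneg_left (hgrowth w) hlam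
  have h2 := mul_le_mul_of_nonneg_left (hC ‖w‖ (norm_nonneg w)) hlb
  nlinarith [sq_nonneg ‖w‖]

theorem tendsto_comap_norm_atTop_of_sq_sub_le {E : Type*} [SeminormedAddCommGroup E]
    {J : E → ℝ} {a C : ℝ} (ha : 0 < a) (hJ : ∀ w, a * ‖w‖ ^ 2 - C ≤ J w) :
    Tendsto J (comap norm atTop) atTop :=
  tendsto_atTop_mono hJ <| (tendsto_atTop_add_const_right _ _
    ((tendsto_pow_atTop two_ne_zero).const_mul_atTop ha)).comp tendsto_comap

theorem isBounded_of_bddAbove_image_of_tendsto {E : Type*} [SeminormedAddCommGroup E]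
    {J : E → ℝ} (hJ : Tendsto J (comap norm atTop) atTop) {s : Set E}
    (hs : BddAbove (J '' s)) : IsBounded s := by
  obtain ⟨B, hB⟩ := hs
  obtain ⟨R, -, hR⟩ := ((atTop_basis.comap norm).tendsto_iff atTop_basis).1 hJ (B + 1) trivial
  refine isBounded_iff_forall_norm_le.2 ⟨R, fun x hx => ?_⟩
  by_contra! hRx
  have hJx : B + 1 ≤ J x := hR x hRx.le
  linarith [hB ⟨x, hx, rfl⟩]

theorem exists_subseq_weakly_tendsto_of_isBounded (𝕜 : Type*) {X : Type*} [RCLike 𝕜]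
    [NormedAddCommGroup X] [InnerProductSpace 𝕜 X] [CompleteSpace X] {z : ℕ → X}
    (hz : IsBounded (Set.range z)) :
    ∃ (w : X) (σ : ℕ → ℕ), StrictMono σ ∧
      ∀ f : StrongDual 𝕜 X, Tendsto (fun j => f (z (σ j))) atTop (𝓝 (f w)) := by
  -- The closed span `Y` of the sequence is separable, so sequential Banach–Alaoglu applies in
  -- `Y`'s dual; Riesz representation on `Y` turns the weak-* limit into a weak limit.
  set Y := (Submodule.span 𝕜 (Set.range z)).topologicalClosure
  have : TopologicalSpace.SeparableSpace Y := by
    refine TopologicalSpace.IsSeparable.separableSpace ?_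
    rw [Submodule.topologicalClosure_coe]
    exact (Set.countable_range z).isSeparable.span.closure
  let y : ℕ → Y := fun j =>
    ⟨z j, Submodule.le_topologicalClosure _ (Submodule.subset_span ⟨j, rfl⟩)⟩
  obtain ⟨R, hR⟩ := hz.exists_norm_le
  obtain ⟨φ, -, σ, hσ, hφ⟩ := WeakDual.isSeqCompact_closedBall 𝕜 Y 0 R
    (x := fun j => StrongDual.toWeakDual (toDual 𝕜 Y (y j)))
    (fun j => by simpa [y] using hR _ ⟨j, rfl⟩)
  refine ⟨(toDual 𝕜 Y).symm (WeakDual.toStrongDual φ), σ, hσ, fun f => ?_⟩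
  set v := (toDual 𝕜 Y).symm (f.comp Y.subtypeL)
  have hv (u : Y) : f u = ⟪v, u⟫_𝕜 := (toDual_symm_apply (y := f.comp Y.subtypeL)).symm
  have hlim := (RCLike.continuous_conj.tendsto _).comp
    ((WeakDual.eval_continuous v).tendsto φ |>.comp hφ)
  convert hlim using 1
  · ext j
    simp [hv (y (σ j)), y]
  · rw [hv, ← inner_conj_symm, toDual_symm_apply]
    rfl

theorem tendsto_of_weakly_tendsto_of_inner_sub_tendsto_zero {X α : Type*}
    [NormedAddCommGroup X] [InnerProductSpace ℝ X] {l : Filter α} {u : α → X} {w : X}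
    (hweak : ∀ f : StrongDual ℝ X, Tendsto (fun j => f (u j)) l (𝓝 (f w)))
    (h : Tendsto (fun j => ⟪u j, u j - w⟫_ℝ) l (𝓝 0)) : Tendsto u l (𝓝 w) := by
  have hw : Tendsto (fun j => ⟪w, u j - w⟫_ℝ) l (𝓝 0) := by
    simpa [inner_sub_right] using (hweak (innerSL ℝ w)).sub_const ⟪w, w⟫_ℝ
  have hsq : Tendsto (fun j => ‖u j - w‖ ^ 2) l (𝓝 0) := by
    simpa [← inner_sub_left, real_inner_self_eq_norm_sq] using h.sub hw
  rw [tendsto_iff_norm_sub_tendsto_zero]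
  simpa [Function.comp_def, Real.sqrt_sq_eq_abs] using (Real.continuous_sqrt.tendsto 0).comp hsq

theorem tendsto_inner_sub_of_tendsto_norm_sub_smul {X α : Type*}
    [NormedAddCommGroup X] [InnerProductSpace ℝ X] {l : Filter α} {u : α → X} {w : X}
    {Ψ' : X → StrongDual ℝ X} {lam : ℝ} (hu : IsBounded (Set.range u))
    (hPS : Tendsto (fun j => ‖innerSL ℝ (u j) - lam • Ψ' (u j)‖) l (𝓝 0))
    (hΨ' : Tendsto (fun j => Ψ' (u j) (u j - w)) l (𝓝 0)) :
    Tendsto (fun j => ⟪u j, u j - w⟫_ℝ) l (𝓝 0) := by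
  obtain ⟨R, hR⟩ := hu.exists_norm_le
  have hbdd : IsBoundedUnder (· ≤ ·) l fun j => ‖u j - w‖ :=
    isBoundedUnder_of ⟨R + ‖w‖, fun j =>
      (norm_sub_le _ _).trans (add_le_add_left (hR _ ⟨j, rfl⟩) _)⟩
  have hgrad := (tendsto_zero_iff_norm_tendsto_zero.2 hPS).op_zero_isBoundedUnder_le hbdd
    (fun T v => T v) fun T v => T.le_opNorm v
  simpa using hgrad.add (hΨ'.const_mul lam)

theorem energy_functional_bddBelow_coercive_palaisSmale_general
    {X : Type*} [NormedAddCommGroup X] [InnerProductSpace ℝ X] [CompleteSpace X]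
    (Ψ : X → ℝ) (Ψ' : X → (X →L[ℝ] ℝ))
    (b l : ℝ) (hb : 0 < b) (hl0 : 0 < l) (hl2 : l < 2)
    (hgrowth : ∀ w : X, Ψ w ≤ b * (1 + ‖w‖ ^ l))
    (hweak : ∀ (u : ℕ → X) (wlim : X), Bornology.IsBounded (Set.range u) →
      (∀ f : X →L[ℝ] ℝ, Tendsto (fun j => f (u j)) atTop (𝓝 (f wlim))) →
      Tendsto (fun j => Ψ' (u j) (u j - wlim)) atTop (𝓝 (0 : ℝ)))
    (lam : ℝ) (hlam : 0 < lam) :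
    BddBelow (Set.range fun w : X => (1 / 2 : ℝ) * ‖w‖ ^ 2 - lam * Ψ w) ∧
    Tendsto (fun w : X => (1 / 2 : ℝ) * ‖w‖ ^ 2 - lam * Ψ w)
      (Filter.comap norm atTop) atTop ∧
    (∀ z : ℕ → X,
      (∃ μ : ℝ, Tendsto (fun j => (1 / 2 : ℝ) * ‖z j‖ ^ 2 - lam * Ψ (z j)) atTop (𝓝 μ)) →
      Tendsto (fun j => ‖((innerSL ℝ (z j) : X →L[ℝ] ℝ) - lam • Ψ' (z j))‖) atTop
        (𝓝 (0 : ℝ)) →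
      ∃ (w : X) (σ : ℕ → ℕ), StrictMono σ ∧ Tendsto (fun j => z (σ j)) atTop (𝓝 w)) := by
  obtain ⟨C, hC⟩ := exists_quarter_sq_sub_le_energy hb.le hl0.le hl2 hlam.le hgrowth
  have hcoercive := tendsto_comap_norm_atTop_of_sq_sub_le (by norm_num) hC
  refine ⟨⟨-C, ?_⟩, hcoercive, ?_⟩
  · rintro _ ⟨w, rfl⟩
    linarith [hC w, sq_nonneg ‖w‖]
  rintro z ⟨μ, hμ⟩ hPS
  have hz : IsBounded (Set.range z) :=
    isBounded_of_bddAbove_image_of_tendsto hcoercive (by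
      rw [← Set.range_comp]; exact hμ.bddAbove_range)
  obtain ⟨w, σ, hσ, hzw⟩ := exists_subseq_weakly_tendsto_of_isBounded ℝ hz
  have hzσ : IsBounded (Set.range (z ∘ σ)) := hz.subset (Set.range_comp_subset_range σ z)
  refine ⟨w, σ, hσ, tendsto_of_weakly_tendsto_of_inner_sub_tendsto_zero hzw ?_⟩
  exact tendsto_inner_sub_of_tendsto_norm_sub_smul hzσ (hPS.comp hσ.tendsto_atTop)
    (hweak _ w hzσ hzw)

/-- In a real Hilbert space, if `Ψ` is `C¹` with `Ψ(w) ≤ b(1 + ‖w‖^l)` (`b > 0`,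
`0 < l < 2`) and `Ψ'(w_j)(w_j − w_∞) → 0` along bounded weakly convergent sequences, then
for every `λ > 0` the functional `J_λ(w) = (1/2)‖w‖² − λΨ(w)` is bounded from below,
coercive, and satisfies the Palais–Smale condition. (The Fréchet derivative of `J_λ` at
`w` is `⟨w, ·⟩ − λΨ'(w)`.) -/
theorem energy_functional_bddBelow_coercive_palaisSmale
    {X : Type*} [NormedAddCommGroup X] [InnerProductSpace ℝ X] [CompleteSpace X]
    (Ψ : X → ℝ) (Ψ' : X → (X →L[ℝ] ℝ))
    (hdiff : ∀ w : X, HasFDerivAt Ψ (Ψ' w) w) (hcont : Continuous Ψ')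
    (b l : ℝ) (hb : 0 < b) (hl0 : 0 < l) (hl2 : l < 2)
    (hgrowth : ∀ w : X, Ψ w ≤ b * (1 + ‖w‖ ^ l))
    (hweak : ∀ (u : ℕ → X) (wlim : X), Bornology.IsBounded (Set.range u) →
      (∀ f : X →L[ℝ] ℝ, Tendsto (fun j => f (u j)) atTop (𝓝 (f wlim))) →
      Tendsto (fun j => Ψ' (u j) (u j - wlim)) atTop (𝓝 (0 : ℝ)))
    (lam : ℝ) (hlam : 0 < lam) :
    BddBelow (Set.range fun w : X => (1 / 2 : ℝ) * ‖w‖ ^ 2 - lam * Ψ w) ∧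
    Tendsto (fun w : X => (1 / 2 : ℝ) * ‖w‖ ^ 2 - lam * Ψ w)
      (Filter.comap norm atTop) atTop ∧
    (∀ z : ℕ → X,
      (∃ μ : ℝ, Tendsto (fun j => (1 / 2 : ℝ) * ‖z j‖ ^ 2 - lam * Ψ (z j)) atTop (𝓝 μ)) →
      Tendsto (fun j => ‖((innerSL ℝ (z j) : X →L[ℝ] ℝ) - lam • Ψ' (z j))‖) atTop
        (𝓝 (0 : ℝ)) →
      ∃ (w : X) (σ : ℕ → ℕ), StrictMono σ ∧ Tendsto (fun j => z (σ j)) atTop (𝓝 w)) :=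
  energy_functional_bddBelow_coercive_palaisSmale_general Ψ Ψ' b l hb hl0 hl2 hgrowth hweak lam hlam
end
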